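/- arXiv:1107.6016 — 4 statements merged into one kernel-verified Lean document; each statement's English description precedes it below -/
import Mathlib

section
/- Let f : ℝ → ℝ be continuous and t₀ ∈ ℝ. Then for every s' ∈ ℝ, the pseudo 2-microlocal frontier of f at t₀ satisfies Σ_{f,t₀}(s') ≤ liminf_{u → t₀, u ≠ t₀} α̃_{f,u}, where α̃_{f,u} denotes the pseudo local Hölder exponent of f at u. -/
open MeasureTheory Metric Set Filter

noncomputable section

/-- The `n`-fold iterated integral of `f`, starting from `t₀`. -/
def iterInt (t₀ : ℝ) (f : ℝ → ℝ) : ℕ → ℝ → ℝ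
  | 0 => f
  | n + 1 => fun t => ∫ s in t₀..t, iterInt t₀ f n s

/-- Membership in the pseudo 2-microlocal space `C̃^{σ,s'}_{t₀}`, relative to a domain `D`. -/
def PseudoMemOn (D : Set ℝ) (f : ℝ → ℝ) (t₀ σ s' : ℝ) : Prop :=
  if 0 ≤ σ then
    ∃ C > (0:ℝ), ∃ ρ > (0:ℝ), ∀ u ∈ Metric.ball t₀ ρ ∩ D, ∀ v ∈ Metric.ball t₀ ρ ∩ D,
      |f u - f v| ≤ C * |u - v| ^ σ * (|u - t₀| + |v - t₀|) ^ (-s')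
  else
    ∃ C > (0:ℝ), ∃ ρ > (0:ℝ), ∀ u ∈ Metric.ball t₀ ρ ∩ D, ∀ v ∈ Metric.ball t₀ ρ ∩ D,
      |iterInt t₀ (fun s => f s - f t₀) (-⌊σ⌋).toNat u -
          iterInt t₀ (fun s => f s - f t₀) (-⌊σ⌋).toNat v| ≤
        C * |u - v| ^ (σ + ((-⌊σ⌋).toNat : ℝ)) * (|u - t₀| + |v - t₀|) ^ (-s')

/-- The pseudo 2-microlocal frontier `Σ_{f,t₀}(s')`, relative to a domain `D`. -/
def pseudoFrontierOn (D : Set ℝ) (f : ℝ → ℝ) (t₀ s' : ℝ) : EReal :=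
  sSup {x : EReal | ∃ σ : ℝ, x = (σ : EReal) ∧ PseudoMemOn D f t₀ σ s'}

/-- The pseudo pointwise Hölder exponent `ᾱ_{f,t₀}`, relative to a domain `D`. -/
def pseudoPointwiseExpOn (D : Set ℝ) (f : ℝ → ℝ) (t₀ : ℝ) : EReal :=
  sSup {x : EReal | ∃ α : ℝ, x = (α : EReal) ∧
    Filter.limsup
      (fun ρ : ℝ => ⨆ u ∈ Metric.ball t₀ ρ ∩ D, ⨆ v ∈ Metric.ball t₀ ρ ∩ D,
        ENNReal.ofReal (|f u - f v| / ρ ^ α)) (nhdsWithin 0 (Set.Ioi 0)) < ⊤}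

/-- The pseudo local Hölder exponent `α̃_{f,t₀}`, relative to a domain `D`. -/
def pseudoLocalExpOn (D : Set ℝ) (f : ℝ → ℝ) (t₀ : ℝ) : EReal :=
  sSup {x : EReal | ∃ α : ℝ, x = (α : EReal) ∧
    Filter.limsup
      (fun ρ : ℝ => ⨆ u ∈ Metric.ball t₀ ρ ∩ D, ⨆ v ∈ Metric.ball t₀ ρ ∩ D,
        ENNReal.ofReal (|f u - f v| / |u - v| ^ α)) (nhdsWithin 0 (Set.Ioi 0)) < ⊤}

/-- If near `u` the Hölder quotients of exponent `α` are eventually bounded, then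
`α` is at most the pseudo local exponent at `u`. -/
lemma localExp_ge (f : ℝ → ℝ) (u α K : ℝ)
    (h : ∀ᶠ ρ in nhdsWithin (0:ℝ) (Set.Ioi 0),
      ∀ x ∈ Metric.ball u ρ, ∀ y ∈ Metric.ball u ρ, |f x - f y| / |x - y| ^ α ≤ K) :
    (α : EReal) ≤ pseudoLocalExpOn Set.univ f u := by
  apply le_sSup
  refine ⟨α, rfl, ?_⟩
  have hle : Filter.limsup
      (fun ρ : ℝ => ⨆ x ∈ Metric.ball u ρ ∩ Set.univ, ⨆ y ∈ Metric.ball u ρ ∩ Set.univ,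
        ENNReal.ofReal (|f x - f y| / |x - y| ^ α)) (nhdsWithin 0 (Set.Ioi 0))
      ≤ ENNReal.ofReal K := by
    apply Filter.limsup_le_of_le (h := ?_)
    filter_upwards [h] with ρ hρ
    simp only [Set.inter_univ]
    exact iSup₂_le fun x hx => iSup₂_le fun y hy =>
      ENNReal.ofReal_le_ofReal (hρ x hx y hy)
  exact lt_of_le_of_lt hle ENNReal.ofReal_lt_top

/-- The pseudo local exponent of a continuous function is nonnegative. -/
lemma zero_le_localExp (f : ℝ → ℝ) (hf : Continuous f) (u : ℝ) :
    (0 : EReal) ≤ pseudoLocalExpOn Set.univ f u := by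
  obtain ⟨M, hM⟩ := (isCompact_closedBall u 1).exists_bound_of_continuousOn hf.continuousOn
  have h0 : ((0:ℝ) : EReal) ≤ pseudoLocalExpOn Set.univ f u := by
    apply localExp_ge f u 0 (M + M)
    filter_upwards [Ioo_mem_nhdsGT_of_mem (α := ℝ) ⟨le_refl 0, zero_lt_one⟩] with ρ hρ x hx y hy
    have hx1 : x ∈ Metric.closedBall u 1 :=
      Metric.closedBall_subset_closedBall hρ.2.le (Metric.ball_subset_closedBall hx)
    have hy1 : y ∈ Metric.closedBall u 1 :=
      Metric.closedBall_subset_closedBall hρ.2.le (Metric.ball_subset_closedBall hy)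
    have : |f x - f y| ≤ M + M := by
      calc |f x - f y| ≤ |f x| + |f y| := abs_sub _ _
        _ ≤ M + M := add_le_add (hM x hx1) (hM y hy1)
    simpa [Real.rpow_zero] using this
  simpa using h0

/-- the pseudo 2-microlocal frontier of `f` at `t₀` is bounded above by the
`liminf` of the pseudo local Hölder exponents of `f` at `u`, as `u → t₀` with `u ≠ t₀`. -/
theorem pseudoFrontier_le_liminf_localExp (f : ℝ → ℝ) (hf : Continuous f) (t₀ : ℝ) :
    ∀ s' : ℝ, pseudoFrontierOn Set.univ f t₀ s'
      ≤ Filter.liminf (fun u => pseudoLocalExpOn Set.univ f u) (nhdsWithin t₀ {t₀}ᶜ) := by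
  intro s'
  apply sSup_le
  rintro x ⟨σ, rfl, hmem⟩
  rcases lt_or_ge σ 0 with hσ | hσ
  · refine le_trans ?_ (Filter.le_liminf_of_le (h := Filter.Eventually.of_forall
      fun u => zero_le_localExp f hf u))
    exact_mod_cast hσ.le
  · rw [PseudoMemOn, if_pos hσ] at hmem
    obtain ⟨C, hC, ρ₀, hρ₀, hbound⟩ := hmem
    apply Filter.le_liminf_of_le (h := ?_)
    have hmem' : Metric.ball t₀ ρ₀ ∩ {t₀}ᶜ ∈ nhdsWithin t₀ {t₀}ᶜ :=
      Filter.inter_mem (mem_nhdsWithin_of_mem_nhds (Metric.ball_mem_nhds t₀ hρ₀))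
        self_mem_nhdsWithin
    filter_upwards [hmem'] with u hu
    set d := |u - t₀| with hd_def
    have hd : 0 < d := abs_pos.mpr (sub_ne_zero.mpr hu.2)
    have hdρ : d < ρ₀ := by
      have := hu.1
      rwa [Metric.mem_ball, Real.dist_eq] at this
    set M := max (d ^ (-s')) ((2 * ρ₀) ^ (-s')) with hM_def
    have hM0 : 0 ≤ M := le_trans (Real.rpow_nonneg hd.le _) (le_max_left _ _)
    apply localExp_ge f u σ (C * M)
    have hε : 0 < min (d / 2) (ρ₀ - d) := lt_min (by linarith) (by linarith)
    filter_upwards [Ioo_mem_nhdsGT_of_mem (α := ℝ) ⟨le_refl 0, hε⟩] with ρ hρ x hx y hy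
    have hρd : ρ ≤ d / 2 := hρ.2.le.trans (min_le_left _ _)
    have hρρ₀ : ρ ≤ ρ₀ - d := hρ.2.le.trans (min_le_right _ _)
    have hxu : |x - u| < ρ := by rwa [Metric.mem_ball, Real.dist_eq] at hx
    have hyu : |y - u| < ρ := by rwa [Metric.mem_ball, Real.dist_eq] at hy
    -- x, y are in ball t₀ ρ₀
    have hxt : |x - t₀| < ρ₀ := by
      have : |x - t₀| ≤ |x - u| + |u - t₀| := by
        calc |x - t₀| = |(x - u) + (u - t₀)| := by ring_nf
          _ ≤ |x - u| + |u - t₀| := abs_add_le _ _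
      linarith
    have hyt : |y - t₀| < ρ₀ := by
      have : |y - t₀| ≤ |y - u| + |u - t₀| := by
        calc |y - t₀| = |(y - u) + (u - t₀)| := by ring_nf
          _ ≤ |y - u| + |u - t₀| := abs_add_le _ _
      linarith
    -- lower bounds
    have hxl : d / 2 ≤ |x - t₀| := by
      have h1 : d - |x - u| ≤ |x - t₀| := by
        have : d ≤ |x - t₀| + |x - u| := by
          calc d = |(x - t₀) - (x - u)| := by rw [hd_def]; ring_nf
            _ ≤ |x - t₀| + |x - u| := abs_sub _ _
        linarith
      linarith
    have hyl : d / 2 ≤ |y - t₀| := by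
      have h1 : d - |y - u| ≤ |y - t₀| := by
        have : d ≤ |y - t₀| + |y - u| := by
          calc d = |(y - t₀) - (y - u)| := by rw [hd_def]; ring_nf
            _ ≤ |y - t₀| + |y - u| := abs_sub _ _
        linarith
      linarith
    set w := |x - t₀| + |y - t₀| with hw_def
    have hw1 : d ≤ w := by simp only [hw_def]; linarith
    have hw2 : w ≤ 2 * ρ₀ := by simp only [hw_def]; linarith
    have hwM : w ^ (-s') ≤ M := by
      rcases le_or_gt 0 (-s') with hs | hs
      · exact le_trans (Real.rpow_le_rpow (by positivity) hw2 hs) (le_max_right _ _)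
      · exact le_trans (Real.rpow_le_rpow_of_nonpos hd hw1 hs.le) (le_max_left _ _)
    rcases eq_or_ne x y with rfl | hne
    · simp only [sub_self, abs_zero, zero_div]
      positivity
    · have hxy : (0:ℝ) < |x - y| := abs_pos.mpr (sub_ne_zero.mpr hne)
      have hxyσ : (0:ℝ) < |x - y| ^ σ := Real.rpow_pos_of_pos hxy σ
      rw [div_le_iff₀ hxyσ]
      have hb := hbound x ⟨Metric.mem_ball.mpr (by rwa [Real.dist_eq]), Set.mem_univ x⟩
        y ⟨Metric.mem_ball.mpr (by rwa [Real.dist_eq]), Set.mem_univ y⟩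
      calc |f x - f y| ≤ C * |x - y| ^ σ * (|x - t₀| + |y - t₀|) ^ (-s') := hb
        _ ≤ C * |x - y| ^ σ * M :=
          mul_le_mul_of_nonneg_left hwM (by positivity)
        _ = C * M * |x - y| ^ σ := by ring

end
end

section
/- For every α ∈ (0,1) there exists a continuous non-decreasing function f : [0,1] → [0,1] with f(0) = 0 whose pseudo 2-microlocal frontier at t₀ = 0 satisfies, for all s' ≥ −1: Σ_{f,0}(s') = min((s' + 1)/(1 − log₂ α), 1), where log₂ α = log α / log 2. In particular its pseudo pointwise Hölder exponent at 0 equals 1 and its pseudo local Hölder exponent at 0 equals 1/(1 − log₂ α). -/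
open MeasureTheory Metric Set Filter

noncomputable section

namespace Chirp

/-- dyadic scales -/
def rr (n : ℕ) : ℝ := (2:ℝ) ^ (-(n:ℝ))
/-- ramp lengths -/
def ll (c : ℝ) (n : ℕ) : ℝ := (2:ℝ) ^ ((n:ℝ)*c - (n:ℝ) - 1)
/-- slopes -/
def aa (c : ℝ) (n : ℕ) : ℝ := (2:ℝ) ^ (-((n:ℝ)*c))
/-- ramp left endpoints -/
def cc (c : ℝ) (n : ℕ) : ℝ := rr n - ll c n
/-- summands -/
def gg (c : ℝ) (n : ℕ) (t : ℝ) : ℝ := min (rr (n+1)) (aa c n * max 0 (t - cc c n))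
/-- the chirp function -/
def ff (c : ℝ) (t : ℝ) : ℝ := ∑' n, gg c n t

lemma rr_pos (n : ℕ) : 0 < rr n := Real.rpow_pos_of_pos two_pos _
lemma ll_pos (c : ℝ) (n : ℕ) : 0 < ll c n := Real.rpow_pos_of_pos two_pos _
lemma aa_pos (c : ℝ) (n : ℕ) : 0 < aa c n := Real.rpow_pos_of_pos two_pos _

lemma rr_zero : rr 0 = 1 := by simp [rr]

lemma rr_le_one (n : ℕ) : rr n ≤ 1 := by
  rw [rr, show (1:ℝ) = (2:ℝ) ^ (0:ℝ) by simp]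
  exact Real.rpow_le_rpow_of_exponent_le one_le_two (neg_nonpos.mpr (Nat.cast_nonneg n))

lemma rr_succ (n : ℕ) : rr (n+1) = rr n / 2 := by
  rw [rr, rr, show (-((n:ℕ)+1:ℕ):ℝ) = -(n:ℝ) + (-1) by push_cast; ring,
    Real.rpow_add two_pos, Real.rpow_neg_one]
  ring

lemma rr_le_rr {m n : ℕ} (h : m ≤ n) : rr n ≤ rr m :=
  Real.rpow_le_rpow_of_exponent_le one_le_two (by simp; exact_mod_cast h)

lemma rr_eq_pow (n : ℕ) : rr n = ((2:ℝ)⁻¹) ^ n := by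
  rw [rr, ← Real.rpow_natCast (2⁻¹ : ℝ) n, ← Real.rpow_neg_one (2:ℝ),
    ← Real.rpow_mul (by norm_num)]
  norm_num

lemma summable_rr : Summable rr := by
  simp only [funext rr_eq_pow]
  exact summable_geometric_of_lt_one (by norm_num) (by norm_num)

lemma summable_rr' : Summable (fun n => rr (n+1)) := by
  exact (summable_nat_add_iff 1).mpr summable_rr

lemma summable_rr_shift (m : ℕ) : Summable (fun k => rr (m + k)) := by
  apply Summable.congr ((summable_nat_add_iff m).mpr summable_rr)
  intro k; congr 1; omega

lemma tsum_rr_tail (m : ℕ) : ∑' k, rr (m + k) = 2 * rr m := by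
  have h : ∀ k : ℕ, rr (m + k) = rr m * (2⁻¹:ℝ) ^ k := by
    intro k
    rw [rr_eq_pow, rr_eq_pow, pow_add]
  rw [tsum_congr h, tsum_mul_left]
  have : ∑' k : ℕ, (2⁻¹:ℝ) ^ k = 2 := by
    rw [show (2⁻¹:ℝ) = 1/2 by norm_num, tsum_geometric_two]
  rw [this]; ring

variable {c : ℝ}

lemma aa_one_le (hc : c < 0) (n : ℕ) : 1 ≤ aa c n := by
  rw [aa, show (1:ℝ) = (2:ℝ) ^ (0:ℝ) by simp]
  apply Real.rpow_le_rpow_of_exponent_le one_le_two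
  nlinarith [Nat.cast_nonneg (α := ℝ) n]

lemma aa_mul_ll (n : ℕ) : aa c n * ll c n = rr (n+1) := by
  rw [aa, ll, rr, ← Real.rpow_add two_pos]
  congr 1
  push_cast; ring

lemma aa_eq_pow (n : ℕ) : aa c n = ((2:ℝ) ^ (-c)) ^ n := by
  rw [aa, ← Real.rpow_natCast ((2:ℝ) ^ (-c)) n, ← Real.rpow_mul (by norm_num)]
  congr 1; ring

lemma aa_succ (n : ℕ) : aa c (n+1) = aa c n * (2:ℝ) ^ (-c) := by
  rw [aa_eq_pow, aa_eq_pow, pow_succ]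

lemma ll_le (hc : c < 0) (n : ℕ) : ll c n ≤ rr (n+1) := by
  rw [ll, rr]
  apply Real.rpow_le_rpow_of_exponent_le one_le_two
  push_cast
  nlinarith [Nat.cast_nonneg (α := ℝ) n]

lemma cc_nonneg (hc : c < 0) (n : ℕ) : 0 ≤ cc c n := by
  have h1 := ll_le hc n
  have h2 := rr_succ n
  have h3 := rr_pos n
  rw [cc]; linarith

lemma cc_ge (hc : c < 0) (n : ℕ) : rr (n+1) ≤ cc c n := by
  have h1 := ll_le hc n
  have h2 := rr_succ n
  rw [cc]; linarith

lemma cc_le (n : ℕ) : cc c n ≤ rr n := by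
  have := ll_pos c n
  rw [cc]; linarith


/-! ### gg lemmas -/

lemma gg_nonneg (n : ℕ) (t : ℝ) : 0 ≤ gg c n t :=
  le_min (rr_pos _).le (mul_nonneg (aa_pos c n).le (le_max_left _ _))

lemma gg_le (n : ℕ) (t : ℝ) : gg c n t ≤ rr (n+1) := min_le_left _ _

lemma gg_mono (n : ℕ) : Monotone (gg c n) := by
  intro u v h
  apply min_le_min le_rfl
  apply mul_le_mul_of_nonneg_left _ (aa_pos c n).le
  exact max_le_max le_rfl (by linarith)

lemma gg_lip {u v : ℝ} (n : ℕ) (h : u ≤ v) :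
    gg c n v - gg c n u ≤ aa c n * (v - u) := by
  rw [gg, gg]
  have h1 : max 0 (v - cc c n) - max 0 (u - cc c n) ≤ v - u := by
    simp only [max_def]; split_ifs <;> linarith
  set A := rr (n+1)
  set x := aa c n * max 0 (u - cc c n) with hx
  set y := aa c n * max 0 (v - cc c n) with hy
  have h2 : y - x ≤ aa c n * (v - u) := by
    rw [hx, hy, ← mul_sub]
    exact mul_le_mul_of_nonneg_left h1 (aa_pos c n).le
  have hxy : x ≤ y := by
    rw [hx, hy]
    apply mul_le_mul_of_nonneg_left _ (aa_pos c n).le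
    exact max_le_max le_rfl (by linarith)
  rcases le_total x A with hA | hA
  · rw [min_eq_right hA]
    linarith [min_le_right A y]
  · rw [min_eq_left hA, min_eq_left (hA.trans hxy)]
    have hge : 0 ≤ aa c n * (v - u) :=
      mul_nonneg (aa_pos c n).le (sub_nonneg.mpr h)
    linarith

lemma gg_of_le {t : ℝ} (n : ℕ) (h : t ≤ cc c n) : gg c n t = 0 := by
  rw [gg, max_eq_left (by linarith), mul_zero]
  exact min_eq_right (rr_pos _).le

lemma gg_of_ge {t : ℝ} (hc : c < 0) (n : ℕ) (h : rr n ≤ t) : gg c n t = rr (n+1) := by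
  apply min_eq_left
  calc rr (n+1) = aa c n * ll c n := (aa_mul_ll n).symm
    _ ≤ aa c n * max 0 (t - cc c n) := by
        apply mul_le_mul_of_nonneg_left _ (aa_pos c n).le
        refine le_trans ?_ (le_max_right _ _)
        rw [cc]; linarith

lemma gg_ramp {t : ℝ} (n : ℕ) (h1 : cc c n ≤ t) (h2 : t ≤ rr n) :
    gg c n t = aa c n * (t - cc c n) := by
  rw [gg, max_eq_right (by linarith)]
  apply min_eq_right
  calc aa c n * (t - cc c n) ≤ aa c n * ll c n := by
        apply mul_le_mul_of_nonneg_left _ (aa_pos c n).le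
        rw [cc]; linarith
    _ = rr (n+1) := aa_mul_ll n

/-! ### summability and ff basics -/

lemma summable_gg (t : ℝ) : Summable (fun n => gg c n t) :=
  Summable.of_nonneg_of_le (fun n => gg_nonneg n t) (fun n => gg_le n t) summable_rr'

lemma ff_mono : Monotone (ff c) := by
  intro u v h
  exact Summable.tsum_le_tsum (fun n => gg_mono n h) (summable_gg u) (summable_gg v)

lemma ff_nonneg (t : ℝ) : 0 ≤ ff c t := tsum_nonneg (fun n => gg_nonneg n t)

lemma ff_cont : Continuous (ff c) := by
  apply continuous_tsum _ summable_rr' (fun n x => ?_)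
  · intro n
    exact continuous_const.min (continuous_const.mul
      (continuous_const.max (continuous_id.sub continuous_const)))
  · rw [Real.norm_eq_abs, abs_of_nonneg (gg_nonneg n x)]
    exact gg_le n x

lemma ff_zero (hc : c < 0) : ff c 0 = 0 := by
  rw [ff]
  have : ∀ n, gg c n (0:ℝ) = 0 := fun n => gg_of_le n (cc_nonneg hc n)
  simp [this]

lemma ff_diff {u v : ℝ} (h : u ≤ v) :
    ff c v - ff c u = ∑' n, (gg c n v - gg c n u) :=
  (Summable.tsum_sub (summable_gg v) (summable_gg u)).symm

lemma summable_diff (u v : ℝ) : Summable (fun n => gg c n v - gg c n u) :=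
  (summable_gg v).sub (summable_gg u)

/-! ### value formula on ramps -/

lemma ff_ramp (hc : c < 0) (n : ℕ) {δ : ℝ} (hδ0 : 0 ≤ δ) (hδ : δ ≤ ll c n) :
    ff c (rr n - δ) = rr (n+1) + aa c n * (ll c n - δ) := by
  set x := rr n - δ with hxdef
  have hx1 : cc c n ≤ x := by rw [cc, hxdef]; linarith
  have hx2 : x ≤ rr n := by rw [hxdef]; linarith
  have hsplit := Summable.sum_add_tsum_nat_add (f := fun m => gg c m x) (n+1) (summable_gg x)
  have hsum1 : ∑ i ∈ Finset.range (n+1), gg c i x = aa c n * (ll c n - δ) := by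
    rw [Finset.sum_eq_single_of_mem n (Finset.self_mem_range_succ n)]
    · rw [gg_ramp n hx1 hx2, cc, hxdef]; ring_nf
    · intro b hb hbn
      have hbn' : b + 1 ≤ n := by
        have := Finset.mem_range.mp hb; omega
      apply gg_of_le
      calc x ≤ rr n := hx2
        _ ≤ rr (b+1) := rr_le_rr hbn'
        _ ≤ cc c b := cc_ge hc b
  have hsum2 : ∑' k : ℕ, gg c (k + (n+1)) x = rr (n+1) := by
    have h1 : ∀ k : ℕ, gg c (k + (n+1)) x = rr (k + (n+1) + 1) := by
      intro k
      apply gg_of_ge hc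
      calc rr (k + (n+1)) ≤ rr (n+1) := rr_le_rr (by omega)
        _ ≤ cc c n := cc_ge hc n
        _ ≤ x := hx1
    rw [tsum_congr h1]
    have h2 : ∀ k : ℕ, rr (k + (n+1) + 1) = rr ((n+2) + k) := by
      intro k; congr 1; omega
    rw [tsum_congr h2, tsum_rr_tail (n+2)]
    have := rr_succ (n+1)
    linarith
  rw [ff, ← hsplit, hsum1, hsum2]; ring

lemma ff_rr (hc : c < 0) (n : ℕ) : ff c (rr n) = rr n := by
  have := ff_ramp hc n le_rfl (ll_pos c n).le
  rw [sub_zero, sub_zero] at this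
  rw [this, aa_mul_ll]
  have := rr_succ n
  linarith

lemma ff_cc (hc : c < 0) (n : ℕ) : ff c (cc c n) = rr (n+1) := by
  have := ff_ramp hc n (ll_pos c n).le le_rfl
  rw [sub_self, mul_zero, add_zero] at this
  rw [cc]
  exact this

/-! ### scale decomposition -/

lemma exists_scale {t : ℝ} (h0 : 0 < t) (h1 : t ≤ 1) : ∃ n, rr (n+1) < t ∧ t ≤ rr n := by
  have hex : ∃ n, rr (n+1) < t := by
    obtain ⟨n, hn⟩ := exists_pow_lt_of_lt_one h0 (show (2⁻¹:ℝ) < 1 by norm_num)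
    refine ⟨n, lt_of_le_of_lt ?_ hn⟩
    rw [rr_eq_pow]
    exact pow_le_pow_of_le_one (by norm_num) (by norm_num) (by omega)
  refine ⟨Nat.find hex, Nat.find_spec hex, ?_⟩
  rcases Nat.eq_zero_or_pos (Nat.find hex) with h | h
  · rw [h, rr_zero]; exact h1
  · obtain ⟨m, hm⟩ := Nat.exists_eq_add_of_lt h
    simp only [zero_add] at hm
    have hmin := Nat.find_min hex (show m < Nat.find hex by omega)
    rw [hm]
    exact le_of_not_gt hmin

lemma exists_scale' {p : ℝ} (h0 : 0 < p) (h1 : p ≤ 1) : ∃ n, rr n < p ∧ p / 2 ≤ rr n := by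
  have hex : ∃ n, rr n < p := by
    obtain ⟨n, hn⟩ := exists_pow_lt_of_lt_one h0 (show (2⁻¹:ℝ) < 1 by norm_num)
    exact ⟨n, by rw [rr_eq_pow]; exact hn⟩
  refine ⟨Nat.find hex, Nat.find_spec hex, ?_⟩
  rcases Nat.eq_zero_or_pos (Nat.find hex) with h | h
  · exfalso
    have := Nat.find_spec hex
    rw [h, rr_zero] at this
    linarith
  · obtain ⟨m, hm⟩ := Nat.exists_eq_add_of_lt h
    simp only [zero_add] at hm
    have hmin := le_of_not_gt (Nat.find_min hex (show m < Nat.find hex by omega))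
    rw [hm, rr_succ]
    linarith

/-! ### ff t ≤ t -/

set_option maxHeartbeats 1000000 in
lemma ff_le_self (hc : c < 0) {t : ℝ} (h0 : 0 ≤ t) (h1 : t ≤ 1) : ff c t ≤ t := by
  rcases eq_or_lt_of_le h0 with h | h
  · rw [← h, ff_zero hc]
  obtain ⟨n, hn1, hn2⟩ := exists_scale h h1
  have hsplit := Summable.sum_add_tsum_nat_add (f := fun m => gg c m t) (n+1) (summable_gg t)
  have hsum1 : ∑ i ∈ Finset.range (n+1), gg c i t = gg c n t := by
    apply Finset.sum_eq_single_of_mem n (Finset.self_mem_range_succ n)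
    intro b hb hbn
    apply gg_of_le
    calc t ≤ rr n := hn2
      _ ≤ rr (b+1) := rr_le_rr (by have := Finset.mem_range.mp hb; omega)
      _ ≤ cc c b := cc_ge hc b
  have hsum2 : ∑' k : ℕ, gg c (k + (n+1)) t ≤ rr (n+1) := by
    have hle : ∀ k : ℕ, gg c (k + (n+1)) t ≤ rr ((n+2) + k) := by
      intro k
      calc gg c (k + (n+1)) t ≤ rr (k + (n+1) + 1) := gg_le _ _
        _ = rr ((n+2) + k) := by congr 1; omega
    calc ∑' k : ℕ, gg c (k + (n+1)) t
        ≤ ∑' k : ℕ, rr ((n+2) + k) := by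
          apply Summable.tsum_le_tsum hle ((summable_nat_add_iff (n+1)).mpr (summable_gg t))
          exact summable_rr_shift (n+2)
      _ = 2 * rr (n+2) := tsum_rr_tail (n+2)
      _ = rr (n+1) := by have := rr_succ (n+1); linarith
  have hggn : gg c n t ≤ t - rr (n+1) := by
    rcases le_total t (cc c n) with hcase | hcase
    · rw [gg_of_le n hcase]; linarith
    · rw [gg_ramp n hcase hn2]
      have e1 : aa c n * (t - cc c n) = aa c n * ll c n - aa c n * (rr n - t) := by
        rw [cc]; ring
      have e2 : rr n - t ≤ aa c n * (rr n - t) :=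
        le_mul_of_one_le_left (by linarith) (aa_one_le hc n)
      have e3 := aa_mul_ll (c := c) n
      have e4 := rr_succ n
      linarith
  have : ff c t = ∑ i ∈ Finset.range (n+1), gg c i t + ∑' k : ℕ, gg c (k + (n+1)) t :=
    hsplit.symm
  rw [this, hsum1]
  linarith

/-! ### constants -/

def C1 (c : ℝ) : ℝ := (2:ℝ)^(-c) / ((2:ℝ)^(-c) - 1) + 2
def C2 (c : ℝ) : ℝ := ((2:ℝ)^(-c) + 3) * (2:ℝ)^(-c)

lemma x_gt_one (hc : c < 0) : 1 < (2:ℝ)^(-c) :=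
  (Real.one_lt_rpow_iff_of_pos two_pos).mpr (Or.inl ⟨one_lt_two, by linarith⟩)

lemma C1_pos (hc : c < 0) : 0 < C1 c := by
  have := x_gt_one hc
  rw [C1]
  have h1 : 0 < (2:ℝ)^(-c) - 1 := by linarith
  positivity

lemma C2_pos (hc : c < 0) : 0 < C2 c := by
  have := x_gt_one hc
  rw [C2]; nlinarith

/-! ### global Hölder estimate -/

set_option maxHeartbeats 1000000 in
theorem holder (hc : c < 0) {u v : ℝ} (h0 : 0 ≤ u) (huv : u ≤ v) (h1 : v ≤ 1) :
    ff c v - ff c u ≤ C1 c * (v - u) ^ ((1-c)⁻¹) := by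
  have hLne : (1:ℝ) - c ≠ 0 := by linarith
  rcases eq_or_lt_of_le huv with he | hlt
  · rw [← he, sub_self, sub_self, Real.zero_rpow (inv_ne_zero hLne), mul_zero]
  set x := (2:ℝ)^(-c) with hxd
  have hx1 : 1 < x := x_gt_one hc
  have hx0 : 0 < x := by linarith
  set d := v - u with hd
  have hd0 : 0 < d := by rw [hd]; linarith
  have hd1 : d ≤ 1 := by rw [hd]; linarith
  set h := ((1:ℝ)-c)⁻¹ with hh
  have hh0 : 0 < h := by rw [hh]; exact inv_pos.mpr (by linarith)
  have hh1 : h ≤ 1 := by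
    rw [hh]
    rw [inv_le_one_iff₀]
    right; linarith
  -- the crossover index
  have hexK : ∃ n, ll c n ≤ d := by
    obtain ⟨n, hn⟩ := exists_pow_lt_of_lt_one hd0 (show (2⁻¹:ℝ) < 1 by norm_num)
    refine ⟨n, le_of_lt (lt_of_le_of_lt ?_ hn)⟩
    rw [← rr_eq_pow]
    exact (ll_le hc n).trans (rr_le_rr (by omega))
  set K := Nat.find hexK with hKdef
  have hKd : ll c K ≤ d := Nat.find_spec hexK
  -- comparison sequence
  set b : ℕ → ℝ := fun n => if n < K then aa c n * d else rr (n+1) with hb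
  have hdb : ∀ n, gg c n v - gg c n u ≤ b n := by
    intro n
    rw [hb]; dsimp only
    split_ifs
    · exact gg_lip n huv
    · linarith [gg_le (c := c) n v, gg_nonneg (c := c) n u]
  have hsb : Summable b := by
    apply (summable_nat_add_iff K).mp
    apply Summable.congr ((summable_nat_add_iff K).mpr summable_rr')
    intro n
    rw [hb]; dsimp only
    rw [if_neg (by omega)]
  have hmain : ff c v - ff c u ≤ ∑' n, b n := by
    rw [ff_diff huv]
    exact Summable.tsum_le_tsum hdb (summable_diff u v) hsb
  have hsplitb := Summable.sum_add_tsum_nat_add (f := b) K hsb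
  have h1b : ∑ i ∈ Finset.range K, b i = (∑ i ∈ Finset.range K, x^i) * d := by
    rw [Finset.sum_mul]
    apply Finset.sum_congr rfl
    intro i hi
    rw [hb]; dsimp only
    rw [if_pos (Finset.mem_range.mp hi), aa_eq_pow]
  have h2b : ∑' k : ℕ, b (k + K) = rr K := by
    have he : ∀ k : ℕ, b (k + K) = rr ((K+1) + k) := by
      intro k
      rw [hb]; dsimp only
      rw [if_neg (by omega)]
      congr 1; omega
    rw [tsum_congr he, tsum_rr_tail (K+1)]
    have := rr_succ K
    linarith
  -- claim 1 : rr K ≤ 2 * d ^ h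
  have claim1 : rr K ≤ 2 * d ^ h := by
    have e1 : (ll c K) ^ h ≤ d ^ h := Real.rpow_le_rpow (ll_pos c K).le hKd hh0.le
    have e2 : (ll c K) ^ h = (2:ℝ) ^ (((K:ℝ)*c - K - 1) * h) := by
      rw [ll]; exact (Real.rpow_mul (by norm_num) _ _).symm
    have e3 : ((K:ℝ)*c - K - 1) * h = -(K:ℝ) - h := by
      rw [hh]; field_simp; ring
    have e4 : (2:ℝ) ^ (-(K:ℝ) - 1) ≤ (2:ℝ) ^ (-(K:ℝ) - h) :=
      Real.rpow_le_rpow_of_exponent_le one_le_two (by linarith)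
    have e5 : (2:ℝ) ^ (-(K:ℝ) - 1) = rr K / 2 := by
      rw [rr, show -(K:ℝ)-1 = -(K:ℝ) + (-1) by ring, Real.rpow_add two_pos, Real.rpow_neg_one]
      ring
    rw [e3] at e2
    rw [e2] at e1
    rw [e5] at e4
    linarith
  -- claim 2 : x^K * d ≤ x * d ^ h
  have hdsplit : d ^ h * d ^ (1-h) = d := by
    rw [← Real.rpow_add hd0, show h + (1-h) = 1 by ring, Real.rpow_one]
  have claim2 : x^K * d ≤ x * d ^ h := by
    rcases Nat.eq_zero_or_pos K with hK0 | hKpos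
    · rw [hK0, pow_zero, one_mul]
      have e1 : d ^ (1-h) ≤ 1 := Real.rpow_le_one hd0.le hd1 (by linarith)
      have e2 : d ≤ d ^ h := by
        calc d = d ^ h * d ^ (1-h) := hdsplit.symm
          _ ≤ d ^ h * 1 := mul_le_mul_of_nonneg_left e1 (Real.rpow_nonneg hd0.le h)
          _ = d ^ h := mul_one _
      calc d ≤ d ^ h := e2
        _ = 1 * d ^ h := (one_mul _).symm
        _ ≤ x * d ^ h := mul_le_mul_of_nonneg_right hx1.le (Real.rpow_nonneg hd0.le h)
    · obtain ⟨m, hm⟩ := Nat.exists_eq_add_of_lt hKpos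
      simp only [zero_add] at hm
      have hdm : d ≤ ll c m :=
        le_of_lt (not_le.mp (Nat.find_min hexK (show m < K by omega)))
      have e1 : d ^ (1-h) ≤ (ll c m) ^ (1-h) :=
        Real.rpow_le_rpow hd0.le hdm (by linarith)
      have e2 : x^K = (2:ℝ)^((K:ℝ) * (-c)) := by
        rw [hxd, ← Real.rpow_natCast ((2:ℝ)^(-c)) K, ← Real.rpow_mul (by norm_num)]
        congr 1; ring
      have e3 : (ll c m) ^ (1-h) = (2:ℝ) ^ (((m:ℝ)*c - m - 1) * (1-h)) := by
        rw [ll]; exact (Real.rpow_mul (by norm_num) _ _).symm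
      have hKm : (K:ℝ) = (m:ℝ) + 1 := by rw [hm]; push_cast; ring
      have key : (K:ℝ)*(-c) + ((m:ℝ)*c - m - 1)*(1-h) = (-c) - (1-h) := by
        rw [hKm, hh]; field_simp; ring
      have e4 : x^K * (ll c m) ^ (1-h) ≤ x := by
        rw [e2, e3, ← Real.rpow_add two_pos, key, hxd]
        exact Real.rpow_le_rpow_of_exponent_le one_le_two (by linarith)
      calc x^K * d = (x^K * d ^ (1-h)) * d ^ h := by rw [mul_assoc, mul_comm (d ^ (1-h)), hdsplit]
        _ ≤ (x^K * (ll c m) ^ (1-h)) * d ^ h := by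
            apply mul_le_mul_of_nonneg_right _ (Real.rpow_nonneg hd0.le h)
            exact mul_le_mul_of_nonneg_left e1 (pow_nonneg hx0.le K)
        _ ≤ x * d ^ h := mul_le_mul_of_nonneg_right e4 (Real.rpow_nonneg hd0.le h)
  have hgeom : ∑ i ∈ Finset.range K, x^i ≤ x^K / (x - 1) := by
    rw [geom_sum_eq (ne_of_gt hx1)]
    have hx2 : 0 < x - 1 := by linarith
    exact (div_le_div_iff_of_pos_right hx2).mpr (by linarith)
  have hdh0 : 0 ≤ d ^ h := Real.rpow_nonneg hd0.le h
  have hx2 : 0 < x - 1 := by linarith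
  calc ff c v - ff c u ≤ ∑' n, b n := hmain
    _ = ∑ i ∈ Finset.range K, b i + ∑' k, b (k + K) := hsplitb.symm
    _ = (∑ i ∈ Finset.range K, x^i) * d + rr K := by rw [h1b, h2b]
    _ ≤ (x^K / (x-1)) * d + 2 * d ^ h := by
        apply add_le_add _ claim1
        exact mul_le_mul_of_nonneg_right hgeom hd0.le
    _ = (x^K * d) / (x-1) + 2 * d ^ h := by ring
    _ ≤ (x * d ^ h) / (x-1) + 2 * d ^ h := by
        apply add_le_add _ le_rfl
        exact (div_le_div_iff_of_pos_right hx2).mpr claim2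
    _ = C1 c * d ^ h := by rw [C1, ← hxd]; field_simp

/-! ### weighted Lipschitz estimate -/

set_option maxHeartbeats 1000000 in
theorem slope (hc : c < 0) {u v : ℝ} (h0 : 0 ≤ u) (huv : u ≤ v) (h1 : v ≤ 1) :
    ff c v - ff c u ≤ C2 c * (v - u) * (u + v) ^ c := by
  set x := (2:ℝ)^(-c) with hxd
  have hx1 : 1 < x := x_gt_one hc
  have hx0 : 0 < x := by linarith
  rcases eq_or_lt_of_le huv with he | hlt
  · rw [← he, sub_self, sub_self, mul_zero, zero_mul]
  have hv0 : 0 < v := lt_of_le_of_lt h0 hlt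
  set d := v - u with hd
  have hd0 : 0 < d := by rw [hd]; linarith
  obtain ⟨n₁, hn1, hn2⟩ := exists_scale hv0 h1
  -- terms below n₁ vanish
  have hvan : ∀ m, m < n₁ → gg c m v - gg c m u = 0 := by
    intro m hm
    have hvle : v ≤ cc c m := by
      calc v ≤ rr n₁ := hn2
        _ ≤ rr (m+1) := rr_le_rr (by omega)
        _ ≤ cc c m := cc_ge hc m
    rw [gg_of_le m hvle, gg_of_le m (le_trans huv hvle)]
    ring
  -- uniform bound by (x + 3) * aa c n₁ * d
  have hmain : ff c v - ff c u ≤ (x + 3) * (aa c n₁ * d) := by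
    rw [ff_diff huv]
    have haa1 : 1 ≤ aa c n₁ := aa_one_le hc n₁
    rcases le_or_gt d (rr (n₁+2)) with hcase | hcase
    · -- only scales n₁, n₁+1 are active
      have hvan2 : ∀ m, n₁ + 2 ≤ m → gg c m v - gg c m u = 0 := by
        intro m hm
        have hu : rr m ≤ u := by
          have e1 : rr (n₁+1) = 2 * rr (n₁+2) := by have := rr_succ (n₁+1); linarith
          calc rr m ≤ rr (n₁+2) := rr_le_rr hm
            _ = rr (n₁+1) - rr (n₁+2) := by linarith
            _ ≤ v - d := by linarith
            _ = u := by rw [hd]; ring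
        rw [gg_of_ge hc m hu, gg_of_ge hc m (le_trans hu huv)]
        ring
      have hts : ∑' m, (gg c m v - gg c m u) =
          ∑ m ∈ ({n₁, n₁+1} : Finset ℕ), (gg c m v - gg c m u) := by
        apply tsum_eq_sum
        intro m hm
        simp only [Finset.mem_insert, Finset.mem_singleton] at hm
        push_neg at hm
        rcases Nat.lt_or_ge m n₁ with h' | h'
        · exact hvan m h'
        · exact hvan2 m (by omega)
      rw [hts, Finset.sum_pair (by omega)]
      have e1 : gg c n₁ v - gg c n₁ u ≤ aa c n₁ * d := gg_lip n₁ huv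
      have e2 : gg c (n₁+1) v - gg c (n₁+1) u ≤ aa c n₁ * x * d := by
        have := gg_lip (c := c) (n₁+1) huv
        rw [aa_succ] at this
        exact this
      have haad : 0 ≤ aa c n₁ * d := mul_nonneg (aa_pos c n₁).le hd0.le
      nlinarith
    · -- d is large: cap the tail
      have hsplit := Summable.sum_add_tsum_nat_add (f := fun m => gg c m v - gg c m u) (n₁+1)
        (summable_diff u v)
      have hsum1 : ∑ i ∈ Finset.range (n₁+1), (gg c i v - gg c i u) =
          gg c n₁ v - gg c n₁ u := by
        apply Finset.sum_eq_single_of_mem n₁ (Finset.self_mem_range_succ n₁)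
        intro b hb hbn
        exact hvan b (by have := Finset.mem_range.mp hb; omega)
      have hsum2 : ∑' k : ℕ, (gg c (k + (n₁+1)) v - gg c (k + (n₁+1)) u) ≤ rr (n₁+1) := by
        have hle : ∀ k : ℕ, gg c (k + (n₁+1)) v - gg c (k + (n₁+1)) u ≤ rr ((n₁+2) + k) := by
          intro k
          have e : rr ((n₁+2) + k) = rr (k + (n₁+1) + 1) := by congr 1; omega
          rw [e]
          linarith [gg_le (c := c) (k + (n₁+1)) v, gg_nonneg (c := c) (k + (n₁+1)) u]
        calc ∑' k : ℕ, (gg c (k + (n₁+1)) v - gg c (k + (n₁+1)) u)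
            ≤ ∑' k : ℕ, rr ((n₁+2) + k) := by
              apply Summable.tsum_le_tsum hle ((summable_nat_add_iff (n₁+1)).mpr (summable_diff u v))
              exact summable_rr_shift (n₁+2)
          _ = 2 * rr (n₁+2) := tsum_rr_tail (n₁+2)
          _ = rr (n₁+1) := by have := rr_succ (n₁+1); linarith
      have e1 : gg c n₁ v - gg c n₁ u ≤ aa c n₁ * d := gg_lip n₁ huv
      have e2 : rr (n₁+1) ≤ 2 * d := by have := rr_succ (n₁+1); linarith
      have haad : 0 ≤ aa c n₁ * d := mul_nonneg (aa_pos c n₁).le hd0.le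
      have := hsplit.symm
      rw [hsum1] at this
      rw [this]
      have hle2 : 2 * d ≤ 2 * (aa c n₁ * d) := by nlinarith
      nlinarith [hsum2]
  -- convert aa c n₁ to the weight (u+v)^c
  have hw0 : 0 < u + v := by linarith
  have hwle : u + v ≤ 2 * rr n₁ := by linarith [hn2]
  have hwc : (2 * rr n₁) ^ c ≤ (u + v) ^ c :=
    Real.rpow_le_rpow_of_nonpos hw0 hwle hc.le
  have h2r : 2 * rr n₁ = (2:ℝ)^(1 - (n₁:ℝ)) := by
    have e : (2:ℝ)^(1 - (n₁:ℝ)) = (2:ℝ)^(1:ℝ) * (2:ℝ)^(-(n₁:ℝ)) := by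
      rw [← Real.rpow_add two_pos]; ring_nf
    rw [e, Real.rpow_one, rr]
  have hwc3 : (2 * rr n₁) ^ c = (2:ℝ)^((1 - (n₁:ℝ))*c) := by
    rw [h2r]; exact (Real.rpow_mul (by norm_num) _ _).symm
  have hwc4 : (2:ℝ)^((1-(n₁:ℝ))*c) = (2:ℝ)^c * aa c n₁ := by
    rw [aa, ← Real.rpow_add two_pos]; congr 1; ring
  have haaw : aa c n₁ ≤ x * (u+v)^c := by
    have e1 : (2:ℝ)^c * aa c n₁ ≤ (u+v)^c := by rw [← hwc4, ← hwc3]; exact hwc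
    have hxc : x * (2:ℝ)^c = 1 := by
      rw [hxd, ← Real.rpow_add two_pos]; simp
    calc aa c n₁ = x * ((2:ℝ)^c * aa c n₁) := by rw [← mul_assoc, hxc, one_mul]
      _ ≤ x * (u+v)^c := mul_le_mul_of_nonneg_left e1 hx0.le
  calc ff c v - ff c u ≤ (x + 3) * (aa c n₁ * d) := hmain
    _ ≤ (x + 3) * ((x * (u+v)^c) * d) := by
        apply mul_le_mul_of_nonneg_left _ (by linarith)
        exact mul_le_mul_of_nonneg_right haaw hd0.le
    _ = C2 c * d * (u+v)^c := by rw [C2, ← hxd]; ring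

/-! ### interpolated estimate -/

def C0 (c : ℝ) : ℝ := max 1 (C1 c) * max 1 (C2 c)

lemma C0_pos (hc : c < 0) : 0 < C0 c := by
  rw [C0]
  have := C1_pos hc; have := C2_pos hc
  positivity

lemma rpow_le_max_one {b t : ℝ} (hb : 0 < b) (ht0 : 0 ≤ t) (ht1 : t ≤ 1) :
    b ^ t ≤ max 1 b := by
  rcases le_total b 1 with h | h
  · exact le_trans (Real.rpow_le_one hb.le h ht0) (le_max_left _ _)
  · calc b ^ t ≤ b ^ (1:ℝ) := Real.rpow_le_rpow_of_exponent_le h ht1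
      _ = b := Real.rpow_one b
      _ ≤ max 1 b := le_max_right _ _

set_option maxHeartbeats 1000000 in
theorem key (hc : c < 0) {σ u v : ℝ} (hσ0 : 0 ≤ σ) (hσ1 : σ ≤ 1)
    (h0 : 0 ≤ u) (huv : u ≤ v) (h1 : v ≤ 1) :
    ff c v - ff c u ≤ C0 c * (v-u) ^ σ * (u+v) ^ (1 - σ*(1-c)) := by
  have hL1 : (1:ℝ) < 1 - c := by linarith
  have hLne : (1:ℝ) - c ≠ 0 := by linarith
  have hC1 := C1_pos hc
  have hC2 := C2_pos hc
  have hM1 : (1:ℝ) ≤ max 1 (C1 c) := le_max_left _ _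
  have hM2 : (1:ℝ) ≤ max 1 (C2 c) := le_max_left _ _
  rcases eq_or_lt_of_le huv with he | hlt
  · rw [← he, sub_self, sub_self]
    apply mul_nonneg (mul_nonneg (C0_pos hc).le (Real.rpow_nonneg le_rfl σ))
    exact Real.rpow_nonneg (by linarith) _
  have hX0 : (0:ℝ) < v - u := by linarith
  have hY0 : (0:ℝ) < u + v := by linarith
  set X := v - u with hXdef
  set Y := u + v with hYdef
  set A := ff c v - ff c u with hAdef
  have hA0 : 0 ≤ A := sub_nonneg.mpr (ff_mono huv)
  have hRHS0 : 0 ≤ C0 c * X ^ σ * Y ^ (1 - σ*(1-c)) := by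
    apply mul_nonneg (mul_nonneg (C0_pos hc).le (Real.rpow_nonneg hX0.le σ))
    exact Real.rpow_nonneg hY0.le _
  rcases eq_or_lt_of_le hA0 with hA | hApos
  · rw [← hA]; exact hRHS0
  have hAY : A ≤ Y := by
    have e1 : ff c v ≤ v := ff_le_self hc (le_trans h0 huv) h1
    have e2 : 0 ≤ ff c u := ff_nonneg u
    rw [hAdef, hYdef]; linarith
  have hB1 : A ≤ C1 c * X ^ ((1-c)⁻¹) := holder hc h0 huv h1
  have hB2 : A ≤ C2 c * X * Y ^ c := slope hc h0 huv h1
  rcases le_or_gt (σ*(1-c)) 1 with hcase | hcase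
  · -- interpolate between the trivial bound and the Hölder bound
    set t := σ*(1-c) with htdef
    have ht0 : 0 ≤ t := by rw [htdef]; positivity
    have hsplitA : A = A^(1-t) * A^t := by
      rw [← Real.rpow_add hApos, show 1-t+t = (1:ℝ) by ring, Real.rpow_one]
    have e1 : A^(1-t) ≤ Y^(1-t) := Real.rpow_le_rpow hA0 hAY (by linarith)
    have e2 : A^t ≤ (C1 c * X^((1-c)⁻¹))^t := Real.rpow_le_rpow hA0 hB1 ht0
    have ht1 : t ≤ 1 := hcase
    have e3 : (C1 c * X^((1-c)⁻¹))^t = C1 c^t * X^σ := by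
      rw [Real.mul_rpow hC1.le (Real.rpow_nonneg hX0.le _), ← Real.rpow_mul hX0.le]
      congr 1
      rw [htdef]
      field_simp
    have e2' : A^t ≤ C1 c^t * X^σ := by rw [← e3]; exact e2
    calc A = A^(1-t) * A^t := hsplitA
      _ ≤ Y^(1-t) * (C1 c^t * X^σ) :=
          mul_le_mul e1 e2' (Real.rpow_nonneg hA0 t) (Real.rpow_nonneg hY0.le _)
      _ ≤ Y^(1-t) * (max 1 (C1 c) * X^σ) := by
          apply mul_le_mul_of_nonneg_left _ (Real.rpow_nonneg hY0.le _)
          exact mul_le_mul_of_nonneg_right (rpow_le_max_one hC1 ht0 ht1)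
            (Real.rpow_nonneg hX0.le σ)
      _ ≤ C0 c * X^σ * Y^(1-t) := by
          have e5 : Y^(1-t) * (max 1 (C1 c) * X^σ) = max 1 (C1 c) * X^σ * Y^(1-t) := by
            ring
          rw [e5, C0]
          have h2 : max 1 (C1 c) ≤ max 1 (C1 c) * max 1 (C2 c) :=
            le_mul_of_one_le_right (by linarith) hM2
          apply mul_le_mul_of_nonneg_right _ (Real.rpow_nonneg hY0.le _)
          exact mul_le_mul_of_nonneg_right h2 (Real.rpow_nonneg hX0.le σ)
  · -- interpolate between the Hölder bound and the weighted Lipschitz bound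
    have hc0 : (0:ℝ) < -c := by linarith
    set t := (σ*(1-c) - 1)/(-c) with htdef
    have ht0 : 0 ≤ t := div_nonneg (by linarith) hc0.le
    have ht1 : t ≤ 1 := by
      rw [htdef, div_le_one hc0]
      nlinarith
    have hcne : c ≠ 0 := ne_of_lt hc
    have idX : ((1:ℝ)-c)⁻¹*(1-t) + t = σ := by
      rw [htdef]
      field_simp [hcne, hLne]
      ring
    have idY : c*t = 1 - σ*(1-c) := by
      rw [htdef]
      field_simp [hcne, hLne]
      ring
    have hsplitA : A = A^(1-t) * A^t := by
      rw [← Real.rpow_add hApos, show 1-t+t = (1:ℝ) by ring, Real.rpow_one]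
    have e1 : A^(1-t) ≤ (C1 c * X^((1-c)⁻¹))^(1-t) :=
      Real.rpow_le_rpow hA0 hB1 (by linarith)
    have e2 : A^t ≤ (C2 c * X * Y^c)^t := Real.rpow_le_rpow hA0 hB2 ht0
    have e3 : (C1 c * X^((1-c)⁻¹))^(1-t) = C1 c^(1-t) * X^(((1:ℝ)-c)⁻¹*(1-t)) := by
      rw [Real.mul_rpow hC1.le (Real.rpow_nonneg hX0.le _), ← Real.rpow_mul hX0.le]
    have e4 : (C2 c * X * Y^c)^t = C2 c^t * X^t * Y^(c*t) := by
      rw [Real.mul_rpow (mul_nonneg hC2.le hX0.le) (Real.rpow_nonneg hY0.le _),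
        Real.mul_rpow hC2.le hX0.le, ← Real.rpow_mul hY0.le]
    calc A = A^(1-t) * A^t := hsplitA
      _ ≤ (C1 c^(1-t) * X^(((1:ℝ)-c)⁻¹*(1-t))) * (C2 c^t * X^t * Y^(c*t)) := by
          rw [← e3, ← e4]
          exact mul_le_mul e1 e2 (Real.rpow_nonneg hA0 t)
            (Real.rpow_nonneg (mul_nonneg hC1.le (Real.rpow_nonneg hX0.le _)) _)
      _ = (C1 c^(1-t) * C2 c^t) * (X^(((1:ℝ)-c)⁻¹*(1-t)) * X^t * Y^(c*t)) := by ring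
      _ = (C1 c^(1-t) * C2 c^t) * (X^σ * Y^(1 - σ*(1-c))) := by
          rw [← Real.rpow_add hX0, idX, idY]
      _ ≤ C0 c * (X^σ * Y^(1 - σ*(1-c))) := by
          apply mul_le_mul_of_nonneg_right _
            (mul_nonneg (Real.rpow_nonneg hX0.le _) (Real.rpow_nonneg hY0.le _))
          rw [C0]
          exact mul_le_mul (rpow_le_max_one hC1 (by linarith) (by linarith))
            (rpow_le_max_one hC2 ht0 ht1) (Real.rpow_nonneg hC2.le t)
            (le_trans zero_le_one hM1)
      _ = C0 c * X^σ * Y^(1 - σ*(1-c)) := by ring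

/-! ### soft machinery -/

lemma sSup_eq_of_forall {P : ℝ → Prop} {M : ℝ} (hmem : P M) (hub : ∀ σ, P σ → σ ≤ M) :
    sSup {x : EReal | ∃ σ : ℝ, x = (σ : EReal) ∧ P σ} = (M : EReal) := by
  apply le_antisymm
  · apply sSup_le
    rintro x ⟨σ, rfl, h⟩
    exact_mod_cast hub σ h
  · exact le_sSup ⟨M, rfl, hmem⟩

set_option maxHeartbeats 1000000 in
lemma mem_pseudo (hc : c < 0) {s' : ℝ} (hs' : -1 ≤ s') :
    PseudoMemOn (Set.Icc 0 1) (ff c) 0 (min ((s'+1)/(1-c)) 1) s' := by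
  have hL0 : (0:ℝ) < 1 - c := by linarith
  set M := min ((s'+1)/(1-c)) 1 with hM
  have hM0 : 0 ≤ M := le_min (div_nonneg (by linarith) hL0.le) zero_le_one
  have hM1 : M ≤ 1 := min_le_right _ _
  have hML : M * (1-c) ≤ s' + 1 := by
    have h := min_le_left ((s'+1)/(1-c)) 1
    rw [← hM] at h
    calc M * (1-c) ≤ ((s'+1)/(1-c)) * (1-c) := mul_le_mul_of_nonneg_right h hL0.le
      _ = s' + 1 := by field_simp
  rw [PseudoMemOn, if_pos hM0]
  refine ⟨C0 c, C0_pos hc, 1/2, by norm_num, ?_⟩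
  have haux : ∀ u v : ℝ, u ∈ Metric.ball (0:ℝ) (1/2) ∩ Set.Icc 0 1 →
      v ∈ Metric.ball (0:ℝ) (1/2) ∩ Set.Icc 0 1 → u ≤ v →
      |ff c u - ff c v| ≤ C0 c * |u - v| ^ M * (|u - 0| + |v - 0|) ^ (-s') := by
    intro u v hu hv huv
    have hu0 : 0 ≤ u := hu.2.1
    have hv0 : 0 ≤ v := hv.2.1
    have hv1 : v ≤ 1 := hv.2.2
    have hub : |u| < 1/2 := by
      have := Metric.mem_ball.mp hu.1
      rwa [Real.dist_eq, sub_zero] at this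
    have hvb : |v| < 1/2 := by
      have := Metric.mem_ball.mp hv.1
      rwa [Real.dist_eq, sub_zero] at this
    have hub' : u < 1/2 := lt_of_le_of_lt (le_abs_self u) hub
    have hvb' : v < 1/2 := lt_of_le_of_lt (le_abs_self v) hvb
    have habs1 : |ff c u - ff c v| = ff c v - ff c u := by
      rw [abs_sub_comm, abs_of_nonneg (sub_nonneg.mpr (ff_mono huv))]
    have habs2 : |u - v| = v - u := by
      rw [abs_sub_comm, abs_of_nonneg (sub_nonneg.mpr huv)]
    have habs3 : |u - 0| + |v - 0| = u + v := by
      rw [sub_zero, sub_zero, abs_of_nonneg hu0, abs_of_nonneg hv0]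
    rw [habs1, habs2, habs3]
    rcases eq_or_lt_of_le huv with he | hlt
    · rw [← he, sub_self, sub_self]
      apply mul_nonneg (mul_nonneg (C0_pos hc).le (Real.rpow_nonneg le_rfl M))
      exact Real.rpow_nonneg (by linarith) _
    · have hY0 : 0 < u + v := by linarith
      have hY1 : u + v ≤ 1 := by linarith
      have hexp : (u+v) ^ (1 - M*(1-c)) ≤ (u+v) ^ (-s') :=
        Real.rpow_le_rpow_of_exponent_ge hY0 hY1 (by linarith)
      calc ff c v - ff c u ≤ C0 c * (v-u) ^ M * (u+v) ^ (1 - M*(1-c)) :=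
            key hc hM0 hM1 hu0 huv hv1
        _ ≤ C0 c * (v-u) ^ M * (u+v) ^ (-s') := by
            apply mul_le_mul_of_nonneg_left hexp
            exact mul_nonneg (C0_pos hc).le (Real.rpow_nonneg (by linarith) M)
  intro u hu v hv
  rcases le_total u v with h | h
  · exact haux u v hu hv h
  · have := haux v u hv hu h
    rwa [abs_sub_comm (ff c v), abs_sub_comm v u, add_comm (|v - 0|)] at this

lemma tendsto_rr : Filter.Tendsto rr Filter.atTop (nhds 0) := by
  simp only [funext rr_eq_pow]
  exact tendsto_pow_atTop_nhds_zero_of_lt_one (by norm_num) (by norm_num)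

lemma rr_ball_mem (hρ : (0:ℝ) < ρ') {t : ℝ} (h0 : 0 ≤ t) (h1 : t ≤ 1) (h2 : t < ρ') :
    t ∈ Metric.ball (0:ℝ) ρ' ∩ Set.Icc 0 1 := by
  constructor
  · rw [Metric.mem_ball, Real.dist_eq, sub_zero, abs_of_nonneg h0]
    exact h2
  · exact ⟨h0, h1⟩

set_option maxHeartbeats 1000000 in
lemma frontier_ub (hc : c < 0) {s' σ : ℝ} (hs' : -1 ≤ s')
    (hmem : PseudoMemOn (Set.Icc 0 1) (ff c) 0 σ s') : σ ≤ min ((s'+1)/(1-c)) 1 := by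
  have hL0 : (0:ℝ) < 1 - c := by linarith
  by_contra hσ
  push_neg at hσ
  have hM0 : 0 ≤ min ((s'+1)/(1-c)) 1 :=
    le_min (div_nonneg (by linarith) hL0.le) zero_le_one
  have hσ0 : 0 ≤ σ := le_trans hM0 hσ.le
  rw [PseudoMemOn, if_pos hσ0] at hmem
  obtain ⟨C, hC, ρ, hρ, hineq⟩ := hmem
  rcases min_lt_iff.mp hσ with hA | hgt1
  · -- case (s'+1)/(1-c) < σ
    have hsL : s' + 1 < σ * (1-c) := by
      rw [div_lt_iff₀ hL0] at hA
      linarith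
    set q := (2:ℝ) ^ (s' + 1 - σ*(1-c)) with hq
    have hq1 : q < 1 := Real.rpow_lt_one_of_one_lt_of_neg one_lt_two (by linarith)
    have hq0 : 0 < q := Real.rpow_pos_of_pos two_pos _
    set K₀ := max 1 ((2:ℝ)^(-s')) with hK₀
    have hK₀1 : (1:ℝ) ≤ K₀ := le_max_left _ _
    set B := C * K₀ * (2:ℝ)^(1-σ) with hB
    have hB0 : 0 < B := by
      rw [hB]
      exact mul_pos (mul_pos hC (lt_of_lt_of_le one_pos hK₀1))
        (Real.rpow_pos_of_pos two_pos _)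
    have hev1 : ∀ᶠ n : ℕ in Filter.atTop, q^n < B⁻¹ :=
      (tendsto_pow_atTop_nhds_zero_of_lt_one hq0.le hq1).eventually
        (gt_mem_nhds (by positivity))
    have hev2 : ∀ᶠ n : ℕ in Filter.atTop, rr n < ρ :=
      tendsto_rr.eventually (gt_mem_nhds hρ)
    obtain ⟨n, hn1, hn2⟩ := (hev1.and hev2).exists
    have hcc0 := cc_nonneg hc n
    have hccr := cc_le (c := c) n
    have hu := rr_ball_mem hρ (rr_pos n).le (rr_le_one n) hn2
    have hv := rr_ball_mem hρ hcc0 (hccr.trans (rr_le_one n)) (lt_of_le_of_lt hccr hn2)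
    have key := hineq (rr n) hu (cc c n) hv
    have habs1 : |ff c (rr n) - ff c (cc c n)| = rr (n+1) := by
      rw [ff_rr hc n, ff_cc hc n]
      have := rr_succ n
      rw [abs_of_nonneg (by linarith)]
      linarith
    have habs2 : |rr n - cc c n| = ll c n := by
      rw [cc, abs_of_nonneg (by linarith [ll_pos c n])]
      ring
    have habs3 : |rr n - 0| + |cc c n - 0| = rr n + cc c n := by
      rw [sub_zero, sub_zero, abs_of_nonneg (rr_pos n).le, abs_of_nonneg hcc0]
    rw [habs1, habs2, habs3] at key
    -- bound the weight
    have hw1 : rr n ≤ rr n + cc c n := le_add_of_nonneg_right hcc0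
    have hw2 : rr n + cc c n ≤ 2 * rr n := by linarith
    have hwb : (rr n + cc c n)^(-s') ≤ K₀ * (rr n)^(-s') := by
      rcases le_or_gt 0 (-s') with h | h
      · calc (rr n + cc c n)^(-s') ≤ (2*rr n)^(-s') :=
              Real.rpow_le_rpow (by linarith [rr_pos n]) hw2 h
          _ = (2:ℝ)^(-s') * (rr n)^(-s') := Real.mul_rpow (by norm_num) (rr_pos n).le
          _ ≤ K₀ * (rr n)^(-s') :=
              mul_le_mul_of_nonneg_right (le_max_right _ _) (Real.rpow_nonneg (rr_pos n).le _)
      · calc (rr n + cc c n)^(-s') ≤ (rr n)^(-s') :=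
              Real.rpow_le_rpow_of_nonpos (rr_pos n) hw1 h.le
          _ ≤ K₀ * (rr n)^(-s') :=
              le_mul_of_one_le_left (Real.rpow_nonneg (rr_pos n).le _) hK₀1
    -- exponent computation
    have e1 : (ll c n)^σ = (2:ℝ)^(((n:ℝ)*c - n - 1)*σ) := by
      rw [ll]; exact (Real.rpow_mul (by norm_num) _ _).symm
    have e2 : (rr n)^(-s') = (2:ℝ)^((n:ℝ)*s') := by
      rw [rr, ← Real.rpow_mul (by norm_num)]
      congr 1; ring
    have e3 : (2:ℝ)^(((n:ℝ)*c - n - 1)*σ) * (2:ℝ)^((n:ℝ)*s') =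
        (2:ℝ)^(-(n:ℝ)-1) * ((2:ℝ)^(1-σ) * q^n) := by
      rw [hq, ← Real.rpow_natCast ((2:ℝ)^(s'+1-σ*(1-c))) n, ← Real.rpow_mul (by norm_num),
        ← Real.rpow_add two_pos, ← Real.rpow_add two_pos, ← Real.rpow_add two_pos]
      congr 1; ring
    have hrr1 : rr (n+1) = (2:ℝ)^(-(n:ℝ)-1) := by
      rw [rr]; congr 1; push_cast; ring
    have hllσ0 : 0 ≤ C * (ll c n)^σ := mul_nonneg hC.le (Real.rpow_nonneg (ll_pos c n).le _)
    have final : rr (n+1) ≤ rr (n+1) * (B * q^n) := by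
      calc rr (n+1) ≤ C * (ll c n)^σ * (rr n + cc c n)^(-s') := key
        _ ≤ C * (ll c n)^σ * (K₀ * (rr n)^(-s')) := mul_le_mul_of_nonneg_left hwb hllσ0
        _ = C * K₀ * ((ll c n)^σ * (rr n)^(-s')) := by ring
        _ = C * K₀ * ((2:ℝ)^(-(n:ℝ)-1) * ((2:ℝ)^(1-σ) * q^n)) := by rw [e1, e2, e3]
        _ = rr (n+1) * (B * q^n) := by rw [hrr1, hB]; ring
    have hlt1 : B * q^n < 1 := by
      calc B * q^n < B * B⁻¹ := mul_lt_mul_of_pos_left hn1 hB0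
        _ = 1 := mul_inv_cancel₀ hB0.ne'
    nlinarith [rr_pos (n+1)]
  · -- case 1 < σ
    obtain ⟨n, hρn⟩ : ∃ n, rr n < ρ := by
      obtain ⟨n, hn⟩ := exists_pow_lt_of_lt_one hρ (show (2⁻¹:ℝ) < 1 by norm_num)
      exact ⟨n, by rw [rr_eq_pow]; exact hn⟩
    set K := max ((rr n)^(-s')) ((2*rr n)^(-s')) with hKdef
    have hK0 : 0 < K :=
      lt_of_lt_of_le (Real.rpow_pos_of_pos (rr_pos n) _) (le_max_left _ _)
    set B := C * K with hB
    have hB0 : 0 < B := mul_pos hC hK0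
    set ε := (aa c n / (2*B)) ^ (σ-1)⁻¹ with hε
    have hε0 : 0 < ε :=
      Real.rpow_pos_of_pos (div_pos (aa_pos c n) (by linarith)) _
    set δ := min (ll c n) ε with hδ
    have hδ0 : 0 < δ := lt_min (ll_pos c n) hε0
    have hδl : δ ≤ ll c n := min_le_left _ _
    have hllr : ll c n ≤ rr n := (ll_le hc n).trans (rr_le_rr (by omega))
    have hu0 : 0 ≤ rr n - δ := by linarith
    have hu := rr_ball_mem hρ hu0 (by linarith [rr_le_one n]) (by linarith [rr_pos n, hρn])
    have hv := rr_ball_mem hρ (rr_pos n).le (rr_le_one n) hρn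
    have key := hineq (rr n) hv (rr n - δ) hu
    have hffδ := ff_ramp hc n hδ0.le hδl
    have hffn := ff_rr hc n
    have haml := aa_mul_ll (c := c) n
    have hrs := rr_succ n
    have habs1 : |ff c (rr n) - ff c (rr n - δ)| = aa c n * δ := by
      rw [hffn, hffδ]
      have haa0 := aa_pos c n
      rw [abs_of_nonneg (by nlinarith)]
      nlinarith
    have habs2 : |rr n - (rr n - δ)| = δ := by
      rw [abs_of_nonneg (by linarith)]; ring
    have habs3 : |rr n - 0| + |rr n - δ - 0| = 2 * rr n - δ := by
      rw [sub_zero, sub_zero, abs_of_nonneg (rr_pos n).le, abs_of_nonneg hu0]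
      ring
    rw [habs1, habs2, habs3] at key
    have hwb : (2 * rr n - δ)^(-s') ≤ K := by
      rcases le_or_gt 0 (-s') with h | h
      · calc (2 * rr n - δ)^(-s') ≤ (2*rr n)^(-s') :=
              Real.rpow_le_rpow (by linarith [rr_pos n]) (by linarith) h
          _ ≤ K := le_max_right _ _
      · calc (2 * rr n - δ)^(-s') ≤ (rr n)^(-s') :=
              Real.rpow_le_rpow_of_nonpos (rr_pos n) (by linarith) h.le
          _ ≤ K := le_max_left _ _
    have hδσ : δ^σ = δ^(σ-1) * δ := by
      rw [show σ = (σ-1)+1 by ring, Real.rpow_add hδ0, Real.rpow_one]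
      ring_nf
    have hδσ1 : δ^(σ-1) ≤ aa c n / (2*B) := by
      have e1 : δ^(σ-1) ≤ ε^(σ-1) :=
        Real.rpow_le_rpow hδ0.le (min_le_right _ _) (by linarith)
      have e2 : ε^(σ-1) = aa c n / (2*B) := by
        rw [hε]
        exact Real.rpow_inv_rpow (le_of_lt (div_pos (aa_pos c n) (by linarith)))
          (sub_ne_zero.mpr (ne_of_gt hgt1))
      linarith
    have haa0 := aa_pos c n
    have hfinal : aa c n * δ ≤ (aa c n / 2) * δ := by
      calc aa c n * δ ≤ C * δ^σ * (2*rr n - δ)^(-s') := key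
        _ ≤ C * δ^σ * K := by
            apply mul_le_mul_of_nonneg_left hwb
            exact mul_nonneg hC.le (Real.rpow_nonneg hδ0.le _)
        _ = B * (δ^(σ-1) * δ) := by rw [hB, ← hδσ]; ring
        _ ≤ B * ((aa c n / (2*B)) * δ) := by
            apply mul_le_mul_of_nonneg_left _ hB0.le
            exact mul_le_mul_of_nonneg_right hδσ1 hδ0.le
        _ = (aa c n / 2) * δ := by field_simp
    nlinarith

lemma frontier_eq (hc : c < 0) {s' : ℝ} (hs' : -1 ≤ s') :
    pseudoFrontierOn (Set.Icc 0 1) (ff c) 0 s' = ((min ((s'+1)/(1-c)) 1 : ℝ) : EReal) := by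
  rw [pseudoFrontierOn]
  exact sSup_eq_of_forall (mem_pseudo hc hs') (fun σ h => frontier_ub hc hs' h)

set_option maxHeartbeats 1000000 in
lemma pointwise_eq (hc : c < 0) :
    pseudoPointwiseExpOn (Set.Icc 0 1) (ff c) 0 = ((1:ℝ) : EReal) := by
  rw [pseudoPointwiseExpOn]
  apply sSup_eq_of_forall
  · -- α = 1 works
    have hle : Filter.limsup
        (fun ρ : ℝ => ⨆ u ∈ Metric.ball (0:ℝ) ρ ∩ Set.Icc 0 1,
          ⨆ v ∈ Metric.ball (0:ℝ) ρ ∩ Set.Icc 0 1,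
          ENNReal.ofReal (|ff c u - ff c v| / ρ ^ (1:ℝ)))
        (nhdsWithin 0 (Set.Ioi 0)) ≤ 1 := by
      apply Filter.limsup_le_of_le (by isBoundedDefault)
      filter_upwards [Ioo_mem_nhdsGT_of_mem (show (0:ℝ) ∈ Set.Ico (0:ℝ) 1 by
        constructor <;> norm_num)] with ρ hρ
      obtain ⟨h0, h1⟩ := hρ
      apply iSup₂_le; intro u hu
      apply iSup₂_le; intro v hv
      rw [Real.rpow_one]
      apply ENNReal.ofReal_le_one.mpr
      rw [div_le_one h0]
      have hub : u < ρ := by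
        have := Metric.mem_ball.mp hu.1
        rw [Real.dist_eq, sub_zero] at this
        exact lt_of_le_of_lt (le_abs_self u) this
      have hvb : v < ρ := by
        have := Metric.mem_ball.mp hv.1
        rw [Real.dist_eq, sub_zero] at this
        exact lt_of_le_of_lt (le_abs_self v) this
      have h2 : ff c u ≤ u := ff_le_self hc hu.2.1 hu.2.2
      have h3 : ff c v ≤ v := ff_le_self hc hv.2.1 hv.2.2
      have h4 := ff_nonneg (c := c) u
      have h5 := ff_nonneg (c := c) v
      rw [abs_sub_le_iff]
      constructor <;> linarith
    exact lt_of_le_of_lt hle ENNReal.one_lt_top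
  · intro a ha
    by_contra hgt
    push_neg at hgt
    have hev : ∀ᶠ ρ in nhdsWithin (0:ℝ) (Set.Ioi 0),
        ENNReal.ofReal (ρ^(1-a)/2) ≤ ⨆ u ∈ Metric.ball (0:ℝ) ρ ∩ Set.Icc 0 1,
          ⨆ v ∈ Metric.ball (0:ℝ) ρ ∩ Set.Icc 0 1,
          ENNReal.ofReal (|ff c u - ff c v| / ρ ^ a) := by
      filter_upwards [Ioo_mem_nhdsGT_of_mem (show (0:ℝ) ∈ Set.Ico (0:ℝ) 1 by
        constructor <;> norm_num)] with ρ hρ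
      obtain ⟨h0, h1⟩ := hρ
      obtain ⟨n, hn1, hn2⟩ := exists_scale' h0 h1.le
      have h0mem : (0:ℝ) ∈ Metric.ball (0:ℝ) ρ ∩ Set.Icc 0 1 :=
        rr_ball_mem h0 le_rfl zero_le_one h0
      have hrmem := rr_ball_mem h0 (rr_pos n).le (rr_le_one n) hn1
      have step1 : ENNReal.ofReal (ρ^(1-a)/2) ≤
          ENNReal.ofReal (|ff c 0 - ff c (rr n)| / ρ ^ a) := by
        apply ENNReal.ofReal_le_ofReal
        rw [ff_zero hc, ff_rr hc n, zero_sub, abs_neg, abs_of_nonneg (rr_pos n).le]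
        have hρa : 0 < ρ^a := Real.rpow_pos_of_pos h0 a
        have e : ρ^(1-a) = ρ / ρ^a := by
          rw [show (1:ℝ)-a = 1 + (-a) by ring, Real.rpow_add h0, Real.rpow_one,
            Real.rpow_neg h0.le]
          ring
        rw [e, div_right_comm]
        exact (div_le_div_iff_of_pos_right hρa).mpr (by linarith)
      calc ENNReal.ofReal (ρ^(1-a)/2)
          ≤ ENNReal.ofReal (|ff c 0 - ff c (rr n)| / ρ ^ a) := step1
        _ ≤ ⨆ v ∈ Metric.ball (0:ℝ) ρ ∩ Set.Icc 0 1,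
              ENNReal.ofReal (|ff c 0 - ff c v| / ρ ^ a) :=
            le_biSup (fun v => ENNReal.ofReal (|ff c 0 - ff c v| / ρ ^ a)) hrmem
        _ ≤ ⨆ u ∈ Metric.ball (0:ℝ) ρ ∩ Set.Icc 0 1,
              ⨆ v ∈ Metric.ball (0:ℝ) ρ ∩ Set.Icc 0 1,
              ENNReal.ofReal (|ff c u - ff c v| / ρ ^ a) :=
            le_biSup (fun u => ⨆ v ∈ Metric.ball (0:ℝ) ρ ∩ Set.Icc 0 1,
              ENNReal.ofReal (|ff c u - ff c v| / ρ ^ a)) h0mem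
    have hT : Filter.Tendsto (fun ρ:ℝ => ENNReal.ofReal (ρ^(1-a)/2))
        (nhdsWithin 0 (Set.Ioi 0)) (nhds ⊤) := by
      apply ENNReal.tendsto_ofReal_atTop.comp
      have h3 : Filter.Tendsto (fun x:ℝ => x^(a-1)) Filter.atTop Filter.atTop :=
        tendsto_rpow_atTop (by linarith)
      have h4 := h3.comp tendsto_inv_nhdsGT_zero
      have h2 : Filter.Tendsto (fun ρ:ℝ => ρ^(1-a)) (nhdsWithin 0 (Set.Ioi 0))
          Filter.atTop := by
        apply h4.congr'
        filter_upwards [self_mem_nhdsWithin] with ρ hρ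
        have hρ0 : (0:ℝ) < ρ := hρ
        simp only [Function.comp_apply]
        rw [Real.inv_rpow hρ0.le, ← Real.rpow_neg hρ0.le]
        congr 1; ring
      exact h2.atTop_div_const two_pos
    have htop := Filter.limsup_le_limsup hev
    rw [hT.limsup_eq] at htop
    rw [top_le_iff.mp htop] at ha
    exact lt_irrefl _ ha

set_option maxHeartbeats 1000000 in
lemma local_eq (hc : c < 0) :
    pseudoLocalExpOn (Set.Icc 0 1) (ff c) 0 = ((1/(1-c) : ℝ) : EReal) := by
  have hL0 : (0:ℝ) < 1 - c := by linarith
  have ratio : ∀ u v : ℝ, u ∈ Set.Icc (0:ℝ) 1 → v ∈ Set.Icc (0:ℝ) 1 →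
      |ff c u - ff c v| ≤ C1 c * |u - v| ^ ((1:ℝ)/(1-c)) := by
    have haux : ∀ u v : ℝ, u ∈ Set.Icc (0:ℝ) 1 → v ∈ Set.Icc (0:ℝ) 1 → u ≤ v →
        |ff c u - ff c v| ≤ C1 c * |u - v| ^ ((1:ℝ)/(1-c)) := by
      intro u v hu hv h
      rw [abs_sub_comm, abs_of_nonneg (sub_nonneg.mpr (ff_mono h)), abs_sub_comm u v,
        abs_of_nonneg (sub_nonneg.mpr h), one_div]
      exact holder hc hu.1 h hv.2
    intro u v hu hv
    rcases le_total u v with h | h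
    · exact haux u v hu hv h
    · have := haux v u hv hu h
      rwa [abs_sub_comm (ff c v), abs_sub_comm v u] at this
  rw [pseudoLocalExpOn]
  apply sSup_eq_of_forall
  · -- α = 1/(1-c) works
    have hle : Filter.limsup
        (fun ρ : ℝ => ⨆ u ∈ Metric.ball (0:ℝ) ρ ∩ Set.Icc 0 1,
          ⨆ v ∈ Metric.ball (0:ℝ) ρ ∩ Set.Icc 0 1,
          ENNReal.ofReal (|ff c u - ff c v| / |u - v| ^ ((1:ℝ)/(1-c))))
        (nhdsWithin 0 (Set.Ioi 0)) ≤ ENNReal.ofReal (C1 c) := by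
      apply Filter.limsup_le_of_le (by isBoundedDefault)
      apply Filter.Eventually.of_forall
      intro ρ
      apply iSup₂_le; intro u hu
      apply iSup₂_le; intro v hv
      apply ENNReal.ofReal_le_ofReal
      rcases eq_or_ne u v with rfl | hne
      · simp [sub_self]
        exact (C1_pos hc).le
      · have habs : 0 < |u - v| := abs_pos.mpr (sub_ne_zero.mpr hne)
        have hpos : 0 < |u - v| ^ ((1:ℝ)/(1-c)) := Real.rpow_pos_of_pos habs _
        rw [div_le_iff₀ hpos]
        calc |ff c u - ff c v| ≤ C1 c * |u - v| ^ ((1:ℝ)/(1-c)) := ratio u v hu.2 hv.2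
          _ = C1 c * |u - v| ^ ((1:ℝ)/(1-c)) := rfl
    exact lt_of_le_of_lt hle ENNReal.ofReal_lt_top
  · intro a ha
    by_contra hgt
    push_neg at hgt
    have hae : (0:ℝ) < a*(1-c) - 1 := by
      rw [div_lt_iff₀ hL0] at hgt
      linarith
    set e := a*(1-c) - 1 with hedef
    have hev : ∀ᶠ ρ in nhdsWithin (0:ℝ) (Set.Ioi 0),
        ENNReal.ofReal ((2:ℝ)^(a-1) * ρ^(-e)) ≤
          ⨆ u ∈ Metric.ball (0:ℝ) ρ ∩ Set.Icc 0 1,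
          ⨆ v ∈ Metric.ball (0:ℝ) ρ ∩ Set.Icc 0 1,
          ENNReal.ofReal (|ff c u - ff c v| / |u - v| ^ a) := by
      filter_upwards [Ioo_mem_nhdsGT_of_mem (show (0:ℝ) ∈ Set.Ico (0:ℝ) 1 by
        constructor <;> norm_num)] with ρ hρ
      obtain ⟨h0, h1⟩ := hρ
      obtain ⟨n, hn1, hn2⟩ := exists_scale' h0 h1.le
      have hccmem := rr_ball_mem h0 (cc_nonneg hc n) ((cc_le n).trans (rr_le_one n))
        (lt_of_le_of_lt (cc_le n) hn1)
      have hrmem := rr_ball_mem h0 (rr_pos n).le (rr_le_one n) hn1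
      have habs1 : |ff c (cc c n) - ff c (rr n)| = rr (n+1) := by
        rw [ff_cc hc n, ff_rr hc n]
        have := rr_succ n
        rw [abs_sub_comm, abs_of_nonneg (by linarith)]
        linarith
      have habs2 : |cc c n - rr n| = ll c n := by
        rw [cc, abs_of_nonpos (by linarith [ll_pos c n])]
        ring
      have hval : |ff c (cc c n) - ff c (rr n)| / |cc c n - rr n| ^ a =
          (2:ℝ)^((n:ℝ)*e) * (2:ℝ)^(a-1) := by
        rw [habs1, habs2]
        have hlla : (ll c n)^a = (2:ℝ)^(((n:ℝ)*c - n - 1)*a) := by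
          rw [ll]; exact (Real.rpow_mul (by norm_num) _ _).symm
        have hrr1 : rr (n+1) = (2:ℝ)^(-(n:ℝ)-1) := by
          rw [rr]; congr 1; push_cast; ring
        rw [hrr1, hlla, ← Real.rpow_sub two_pos, ← Real.rpow_add two_pos]
        congr 1
        rw [hedef]; ring
      have hlow : ρ^(-e) ≤ (2:ℝ)^((n:ℝ)*e) := by
        have h2 : (rr n)^(-e) = (2:ℝ)^((n:ℝ)*e) := by
          rw [rr, ← Real.rpow_mul (by norm_num)]
          congr 1; ring
        rw [← h2]
        exact Real.rpow_le_rpow_of_nonpos (rr_pos n) hn1.le (by linarith)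
      calc ENNReal.ofReal ((2:ℝ)^(a-1) * ρ^(-e))
          ≤ ENNReal.ofReal (|ff c (cc c n) - ff c (rr n)| / |cc c n - rr n| ^ a) := by
            apply ENNReal.ofReal_le_ofReal
            rw [hval]
            calc (2:ℝ)^(a-1) * ρ^(-e) ≤ (2:ℝ)^(a-1) * (2:ℝ)^((n:ℝ)*e) :=
                  mul_le_mul_of_nonneg_left hlow (Real.rpow_nonneg (by norm_num) _)
              _ = (2:ℝ)^((n:ℝ)*e) * (2:ℝ)^(a-1) := mul_comm _ _
        _ ≤ ⨆ v ∈ Metric.ball (0:ℝ) ρ ∩ Set.Icc 0 1,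
              ENNReal.ofReal (|ff c (cc c n) - ff c v| / |cc c n - v| ^ a) :=
            le_biSup (fun v => ENNReal.ofReal (|ff c (cc c n) - ff c v| / |cc c n - v| ^ a))
              hrmem
        _ ≤ ⨆ u ∈ Metric.ball (0:ℝ) ρ ∩ Set.Icc 0 1,
              ⨆ v ∈ Metric.ball (0:ℝ) ρ ∩ Set.Icc 0 1,
              ENNReal.ofReal (|ff c u - ff c v| / |u - v| ^ a) :=
            le_biSup (fun u => ⨆ v ∈ Metric.ball (0:ℝ) ρ ∩ Set.Icc 0 1,
              ENNReal.ofReal (|ff c u - ff c v| / |u - v| ^ a)) hccmem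
    have hT : Filter.Tendsto (fun ρ:ℝ => ENNReal.ofReal ((2:ℝ)^(a-1) * ρ^(-e)))
        (nhdsWithin 0 (Set.Ioi 0)) (nhds ⊤) := by
      apply ENNReal.tendsto_ofReal_atTop.comp
      have h3 : Filter.Tendsto (fun x:ℝ => x^e) Filter.atTop Filter.atTop :=
        tendsto_rpow_atTop hae
      have h4 := h3.comp tendsto_inv_nhdsGT_zero
      have h2 : Filter.Tendsto (fun ρ:ℝ => ρ^(-e)) (nhdsWithin 0 (Set.Ioi 0))
          Filter.atTop := by
        apply h4.congr'
        filter_upwards [self_mem_nhdsWithin] with ρ hρ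
        have hρ0 : (0:ℝ) < ρ := hρ
        simp only [Function.comp_apply]
        rw [Real.inv_rpow hρ0.le, ← Real.rpow_neg hρ0.le]
      exact h2.const_mul_atTop (Real.rpow_pos_of_pos two_pos _)
    have htop := Filter.limsup_le_limsup hev
    rw [hT.limsup_eq] at htop
    rw [top_le_iff.mp htop] at ha
    exact lt_irrefl _ ha

end Chirp

/-- for every `α ∈ (0,1)` there is a continuous non-decreasing function
`f : [0,1] → [0,1]` with `f 0 = 0` whose pseudo 2-microlocal frontier at `0` is
`min ((s'+1)/(1 - log₂ α)) 1` for all `s' ≥ -1`; in particular its pseudo pointwise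
Hölder exponent at `0` is `1` and its pseudo local Hölder exponent at `0` is
`1/(1 - log₂ α)`. -/
theorem exists_monotone_with_chirp_pseudoFrontier (α : ℝ) (hα0 : 0 < α) (hα1 : α < 1) :
    ∃ f : ℝ → ℝ, ContinuousOn f (Set.Icc 0 1) ∧ MonotoneOn f (Set.Icc 0 1) ∧
      Set.MapsTo f (Set.Icc 0 1) (Set.Icc 0 1) ∧ f 0 = 0 ∧
      (∀ s' : ℝ, -1 ≤ s' →
        pseudoFrontierOn (Set.Icc 0 1) f 0 s'
          = ((min ((s' + 1) / (1 - Real.log α / Real.log 2)) 1 : ℝ) : EReal)) ∧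
      pseudoPointwiseExpOn (Set.Icc 0 1) f 0 = ((1 : ℝ) : EReal) ∧
      pseudoLocalExpOn (Set.Icc 0 1) f 0
        = ((1 / (1 - Real.log α / Real.log 2) : ℝ) : EReal) := by
  have hc : Real.logb 2 α < 0 := Real.logb_neg one_lt_two hα0 hα1
  have hlog : Real.log α / Real.log 2 = Real.logb 2 α := rfl
  refine ⟨Chirp.ff (Real.logb 2 α), (Chirp.ff_cont).continuousOn,
    (Chirp.ff_mono).monotoneOn _, ?_, Chirp.ff_zero hc, ?_, ?_, ?_⟩
  · intro t ht
    exact ⟨Chirp.ff_nonneg t, le_trans (Chirp.ff_le_self hc ht.1 ht.2) ht.2⟩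
  · intro s' hs'
    rw [hlog]
    exact Chirp.frontier_eq hc hs'
  · exact Chirp.pointwise_eq hc
  · rw [hlog]
    exact Chirp.local_eq hc

end
end

section
/- Let B be a standard Brownian motion on a probability space (Ω, F, P). Then there is an event Ω₀ with P(Ω₀) = 1 such that for every ω ∈ Ω₀, every N ∈ ℕ and every ε > 0, there exists h(ω) > 0 such that for all ρ ∈ (0, h(ω)] and all t ∈ [0, N]: sup{ |B_u(ω) − B_v(ω)| : u, v ∈ [max(t − ρ, 0), t + ρ] } ≥ ρ^{1/2 + ε}. -/
open MeasureTheory Metric Set Filter ProbabilityTheory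

noncomputable section

/-- A standard Brownian motion (indexed by `[0,∞)`, encoded via `ℝ`): starts at `0`,
has continuous sample paths on `[0,∞)`, independent increments, and Gaussian increments
`B_t - B_s ~ N(0, t - s)` for `0 ≤ s ≤ t`. -/
structure IsStandardBM {Ω : Type*} [MeasurableSpace Ω] (P : Measure Ω)
    (B : ℝ → Ω → ℝ) : Prop where
  measurable : ∀ t : ℝ, Measurable (B t)
  init : ∀ᵐ ω ∂P, B 0 ω = 0
  cont : ∀ᵐ ω ∂P, ContinuousOn (fun t => B t ω) (Set.Ici 0)
  indep : ∀ t : ℕ → ℝ, (∀ i, 0 ≤ t i) → Monotone t →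
    iIndepFun (fun i ω => B (t (i + 1)) ω - B (t i) ω) P
  gauss : ∀ s t : ℝ, 0 ≤ s → s ≤ t →
    P.map (fun ω => B t ω - B s ω) = gaussianReal 0 (Real.toNNReal (t - s))

namespace BMIncrLB

open scoped NNReal ENNReal

lemma gauss_abs_bound {v : ℝ≥0} (hv : v ≠ 0) {a : ℝ} (ha : 0 ≤ a) :
    gaussianReal 0 v {x : ℝ | |x| ≤ a} ≤ ENNReal.ofReal (a / Real.sqrt v) := by
  have hvpos : (0:ℝ) < (v:ℝ) := by positivity
  have hset : {x : ℝ | |x| ≤ a} = Set.Icc (-a) a := by ext x; simp [abs_le]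
  rw [gaussianReal_apply 0 hv, hset]
  have hc : (0:ℝ) < Real.sqrt (2 * Real.pi * v) := by
    apply Real.sqrt_pos.2
    have := Real.pi_pos
    positivity
  have hpdf : ∀ x : ℝ, gaussianPDF 0 v x ≤ ENNReal.ofReal ((Real.sqrt (2 * Real.pi * v))⁻¹) := by
    intro x
    apply ENNReal.ofReal_le_ofReal
    rw [ProbabilityTheory.gaussianPDFReal]
    have h1 : Real.exp (-(x - 0)^2 / (2 * v)) ≤ 1 := by
      rw [Real.exp_le_one_iff]
      apply div_nonpos_of_nonpos_of_nonneg
      · nlinarith [sq_nonneg (x - 0)]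
      · positivity
    calc (Real.sqrt (2 * Real.pi * v))⁻¹ * Real.exp (-(x - 0)^2 / (2 * v))
        ≤ (Real.sqrt (2 * Real.pi * v))⁻¹ * 1 := by
          apply mul_le_mul_of_nonneg_left h1 (by positivity)
      _ = (Real.sqrt (2 * Real.pi * v))⁻¹ := mul_one _
  calc ∫⁻ x in Set.Icc (-a) a, gaussianPDF 0 v x
      ≤ ∫⁻ _x in Set.Icc (-a) a, ENNReal.ofReal ((Real.sqrt (2 * Real.pi * v))⁻¹) :=
        lintegral_mono (fun x => hpdf x)
    _ = ENNReal.ofReal ((Real.sqrt (2 * Real.pi * v))⁻¹) * volume (Set.Icc (-a) a) := by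
        rw [setLIntegral_const]
    _ = ENNReal.ofReal ((Real.sqrt (2 * Real.pi * v))⁻¹) * ENNReal.ofReal (a - -a) := by
        rw [Real.volume_Icc]
    _ = ENNReal.ofReal ((Real.sqrt (2 * Real.pi * v))⁻¹ * (a - -a)) := by
        rw [← ENNReal.ofReal_mul (by positivity)]
    _ ≤ ENNReal.ofReal (a / Real.sqrt v) := by
        apply ENNReal.ofReal_le_ofReal
        have hsv : (0:ℝ) < Real.sqrt v := Real.sqrt_pos.2 hvpos
        rw [div_eq_mul_inv]
        have key : Real.sqrt (2 * Real.pi * v) ≥ 2 * Real.sqrt v := by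
          have : Real.sqrt (2 * Real.pi * v) = Real.sqrt (2 * Real.pi) * Real.sqrt v := by
            rw [← Real.sqrt_mul (by positivity)]
          rw [this]
          have h4 : (2:ℝ) ≤ Real.sqrt (2 * Real.pi) := by
            have hpi := Real.pi_gt_three
            have h1 := Real.sq_sqrt (show (0:ℝ) ≤ 2 * Real.pi by linarith)
            nlinarith [Real.sqrt_nonneg (2 * Real.pi)]
          nlinarith
        have hinv : (Real.sqrt (2 * Real.pi * v))⁻¹ ≤ (2 * Real.sqrt v)⁻¹ :=
          inv_anti₀ (by positivity) key
        calc (Real.sqrt (2 * Real.pi * v))⁻¹ * (a - -a)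
            ≤ (2 * Real.sqrt v)⁻¹ * (2 * a) := by
              have : a - -a = 2 * a := by ring
              rw [this]
              exact mul_le_mul_of_nonneg_right hinv (by positivity)
          _ = a * (Real.sqrt v)⁻¹ := by field_simp

lemma prob_block {Ω : Type*} [MeasurableSpace Ω] {P : Measure Ω}
    [IsProbabilityMeasure P] {B : ℝ → Ω → ℝ} (hB : IsStandardBM P B)
    {η : ℝ} (hη : 0 < η) (k m : ℕ) {a : ℝ} (ha : 0 ≤ a) :
    P (⋂ i ∈ Finset.range m,
        {ω | |B (((k + i + 1 : ℕ) : ℝ) * η) ω - B (((k + i : ℕ) : ℝ) * η) ω| ≤ a})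
      ≤ ENNReal.ofReal (a / Real.sqrt η) ^ m := by
  set t : ℕ → ℝ := fun j => ((k + j : ℕ) : ℝ) * η with ht
  have ht0 : ∀ i, 0 ≤ t i := fun i => by positivity
  have htmono : Monotone t := by
    intro i j hij
    have : ((k + i : ℕ) : ℝ) ≤ ((k + j : ℕ) : ℝ) := by exact_mod_cast Nat.add_le_add_left hij k
    exact mul_le_mul_of_nonneg_right this hη.le
  have hind := hB.indep t ht0 htmono
  have hmeasset : MeasurableSet {x : ℝ | |x| ≤ a} :=
    (isClosed_le continuous_abs continuous_const).measurableSet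
  have hkey := hind.measure_inter_preimage_eq_mul (S := Finset.range m)
    (sets := fun _ => {x : ℝ | |x| ≤ a}) (fun i _ => hmeasset)
  have heq : (⋂ i ∈ Finset.range m,
        {ω | |B (((k + i + 1 : ℕ) : ℝ) * η) ω - B (((k + i : ℕ) : ℝ) * η) ω| ≤ a})
      = ⋂ i ∈ Finset.range m,
        (fun ω => B (t (i + 1)) ω - B (t i) ω) ⁻¹' {x : ℝ | |x| ≤ a} := rfl
  rw [heq, hkey]
  have hfac : ∀ i : ℕ, P ((fun ω => B (t (i + 1)) ω - B (t i) ω) ⁻¹' {x : ℝ | |x| ≤ a})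
      ≤ ENNReal.ofReal (a / Real.sqrt η) := by
    intro i
    have hmeas : Measurable (fun ω => B (t (i + 1)) ω - B (t i) ω) :=
      (hB.measurable _).sub (hB.measurable _)
    have hmap := hB.gauss (t i) (t (i + 1)) (ht0 i) (htmono (Nat.le_succ i))
    have hdiff : t (i + 1) - t i = η := by
      simp only [ht]
      push_cast
      ring
    rw [← Measure.map_apply hmeas hmeasset, hmap, hdiff]
    have hvne : Real.toNNReal η ≠ 0 := by
      simp [Real.toNNReal_eq_zero, not_le, hη]
    have := gauss_abs_bound hvne ha
    have hcoe : ((Real.toNNReal η : ℝ≥0) : ℝ) = η := Real.coe_toNNReal _ hη.le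
    rwa [hcoe] at this
  calc ∏ i ∈ Finset.range m, P ((fun ω => B (t (i + 1)) ω - B (t i) ω) ⁻¹' {x : ℝ | |x| ≤ a})
      ≤ ∏ _i ∈ Finset.range m, ENNReal.ofReal (a / Real.sqrt η) :=
        Finset.prod_le_prod' (fun i _ => hfac i)
    _ = ENNReal.ofReal (a / Real.sqrt η) ^ m := by
        rw [Finset.prod_const, Finset.card_range]

def gridη (m n : ℕ) : ℝ := (1/2:ℝ)^(n+1) / (m+1)

def thr (ε : ℝ) (n : ℕ) : ℝ := ((1/2:ℝ)^n) ^ ((1:ℝ)/2 + ε)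

def gridK (m N n : ℕ) : ℕ := ⌈(N:ℝ) / gridη m n⌉₊ + 1

lemma gridη_pos (m n : ℕ) : 0 < gridη m n := by
  unfold gridη; positivity

lemma thr_nonneg (ε : ℝ) (n : ℕ) : 0 ≤ thr ε n := by
  unfold thr; positivity

lemma ratio_eq (m n : ℕ) (ε : ℝ) :
    thr ε n / Real.sqrt (gridη m n)
      = Real.sqrt (2*(m+1)) * ((1/2:ℝ)^n) ^ (ε:ℝ) := by
  set w : ℝ := (1/2:ℝ)^n with hw
  have hwpos : 0 < w := by positivity
  have hmpos : (0:ℝ) < 2*(m+1) := by positivity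
  have h1 : thr ε n = Real.sqrt w * w ^ (ε:ℝ) := by
    unfold thr
    rw [Real.rpow_add hwpos, Real.sqrt_eq_rpow]
  have h2 : gridη m n = w / (2*(m+1)) := by
    unfold gridη
    rw [pow_succ, mul_one_div, div_div]
  have h3 : Real.sqrt (gridη m n) = Real.sqrt w / Real.sqrt (2*(m+1)) := by
    rw [h2, Real.sqrt_div hwpos.le]
  have hsw : Real.sqrt w ≠ 0 := (Real.sqrt_pos.2 hwpos).ne'
  have hsm : Real.sqrt (2*(m+1)) ≠ 0 := (Real.sqrt_pos.2 hmpos).ne'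
  rw [h1, h3]
  field_simp

variable {Ω : Type*} [MeasurableSpace Ω]

def badSet (B : ℝ → Ω → ℝ) (m : ℕ) (ε : ℝ) (N n : ℕ) : Set Ω :=
  ⋃ k ∈ Finset.range (gridK m N n), ⋂ i ∈ Finset.range m,
    {ω | |B (((k + i + 1 : ℕ) : ℝ) * gridη m n) ω
          - B (((k + i : ℕ) : ℝ) * gridη m n) ω| ≤ thr ε n}

lemma badSet_measurable {B : ℝ → Ω → ℝ} (hBm : ∀ t, Measurable (B t))
    (m : ℕ) (ε : ℝ) (N n : ℕ) : MeasurableSet (badSet B m ε N n) := by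
  apply MeasurableSet.biUnion (Finset.range (gridK m N n)).countable_toSet
  intro k _
  apply MeasurableSet.biInter (Finset.range m).countable_toSet
  intro i _
  exact measurableSet_le (((hBm _).sub (hBm _)).abs) measurable_const

lemma badSet_prob {P : Measure Ω} [IsProbabilityMeasure P] {B : ℝ → Ω → ℝ}
    (hB : IsStandardBM P B)
    {m N : ℕ} {ε : ℝ} (hε : 0 < ε) (hm : 3 ≤ (m:ℝ) * ε) (n : ℕ) :
    P (badSet B m ε N n)
      ≤ ENNReal.ofReal ((2*N*(m+1)+2) * (Real.sqrt (2*(m+1)))^m * (1/2:ℝ)^n) := by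
  set w : ℝ := (1/2:ℝ)^n with hw
  have hwpos : 0 < w := by positivity
  have hwle : w ≤ 1 := by
    rw [hw]; exact pow_le_one₀ (by norm_num) (by norm_num)
  set C : ℝ := Real.sqrt (2*(m+1)) with hC
  have hC0 : 0 ≤ C := Real.sqrt_nonneg _
  set E : ℝ := 2*N*(m+1)+2 with hE
  have hE0 : (0:ℝ) ≤ E := by positivity
  have hb : (thr ε n / Real.sqrt (gridη m n))^m ≤ C^m * w^(3:ℕ) := by
    rw [ratio_eq]
    rw [mul_pow]
    apply mul_le_mul_of_nonneg_left _ (by positivity)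
    have h1 : (w ^ (ε:ℝ))^m = w ^ (ε * m) := by
      rw [← Real.rpow_natCast (w ^ (ε:ℝ)) m, ← Real.rpow_mul hwpos.le]
    rw [h1]
    have h2 : w ^ ((3:ℕ):ℝ) = w ^ (3:ℕ) := Real.rpow_natCast w 3
    rw [← h2]
    apply Real.rpow_le_rpow_of_exponent_ge hwpos hwle
    push_cast
    nlinarith
  have hK : (gridK m N n : ℝ) ≤ E * 2^n := by
    have hη := gridη_pos m n
    have hceil : (⌈(N:ℝ)/gridη m n⌉₊ : ℝ) < (N:ℝ)/gridη m n + 1 :=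
      Nat.ceil_lt_add_one (by positivity)
    have hdiv : (N:ℝ)/gridη m n = 2*N*(m+1) * 2^n := by
      unfold gridη
      rw [div_div_eq_mul_div, div_pow, one_pow, div_div_eq_mul_div, div_one, pow_succ]
      ring
    have h2n : (1:ℝ) ≤ 2^n := one_le_pow₀ (by norm_num)
    have : (gridK m N n : ℝ) = (⌈(N:ℝ)/gridη m n⌉₊ : ℝ) + 1 := by
      unfold gridK; push_cast; ring
    rw [this]
    have hNm : (0:ℝ) ≤ 2*N*(m+1) := by positivity
    nlinarith [hceil, hdiv]
  have hstep : P (badSet B m ε N n)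
      ≤ (gridK m N n : ℝ≥0∞) * ENNReal.ofReal (C^m * w^(3:ℕ)) := by
    unfold badSet
    refine le_trans (measure_biUnion_finset_le _ _) ?_
    have hone : ∀ k ∈ Finset.range (gridK m N n),
        P (⋂ i ∈ Finset.range m,
          {ω | |B (((k + i + 1 : ℕ) : ℝ) * gridη m n) ω
            - B (((k + i : ℕ) : ℝ) * gridη m n) ω| ≤ thr ε n})
        ≤ ENNReal.ofReal (C^m * w^(3:ℕ)) := by
      intro k _
      refine le_trans (prob_block hB (gridη_pos m n) k m (thr_nonneg ε n)) ?_
      rw [← ENNReal.ofReal_pow (div_nonneg (thr_nonneg ε n) (Real.sqrt_nonneg _))]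
      exact ENNReal.ofReal_le_ofReal hb
    refine le_trans (Finset.sum_le_sum hone) ?_
    rw [Finset.sum_const, Finset.card_range, nsmul_eq_mul]
  refine le_trans hstep ?_
  have : (gridK m N n : ℝ≥0∞) = ENNReal.ofReal (gridK m N n : ℝ) := by
    rw [ENNReal.ofReal_natCast]
  rw [this, ← ENNReal.ofReal_mul (by positivity)]
  apply ENNReal.ofReal_le_ofReal
  have h2nw : (2:ℝ)^n * w = 1 := by
    rw [hw, ← mul_pow]; norm_num
  have hbm : (0:ℝ) ≤ C^m := by positivity
  calc (gridK m N n : ℝ) * (C^m * w^(3:ℕ))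
      ≤ (E * 2^n) * (C^m * w^(3:ℕ)) := by
        apply mul_le_mul_of_nonneg_right hK (by positivity)
    _ = E * C^m * (2^n * w) * w^2 := by ring
    _ = E * C^m * w^2 := by rw [h2nw]; ring
    _ ≤ E * C^m * w := by
        nlinarith [mul_nonneg (mul_nonneg hE0 hbm) (mul_nonneg hwpos.le (sub_nonneg.2 hwle))]

lemma det_step {B : ℝ → Ω → ℝ} {ω : Ω}
    (hcont : ContinuousOn (fun s => B s ω) (Set.Ici 0))
    {m N : ℕ} {ε : ℝ} (hε : 0 < ε)
    {n : ℕ} (hbad : ω ∉ badSet B m ε N n)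
    {ρ t : ℝ} (hρ1 : (1/2:ℝ)^(n+1) < ρ) (hρ2 : ρ ≤ (1/2:ℝ)^n)
    (ht : t ∈ Set.Icc (0:ℝ) (N:ℝ)) :
    ρ ^ ((1:ℝ)/2 + ε) ≤
      sSup ((fun p : ℝ × ℝ => |B p.1 ω - B p.2 ω|) ''
        (Set.Icc (max (t - ρ) 0) (t + ρ) ×ˢ Set.Icc (max (t - ρ) 0) (t + ρ))) := by
  obtain ⟨ht0, htN⟩ := ht
  have hρ0 : 0 < ρ := lt_trans (by positivity) hρ1
  set η : ℝ := gridη m n with hηdef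
  have hη : 0 < η := gridη_pos m n
  set k : ℕ := ⌈t / η⌉₊ with hk
  have hkK : k ∈ Finset.range (gridK m N n) := by
    rw [Finset.mem_range]
    have h1 : k ≤ ⌈(N:ℝ)/η⌉₊ := Nat.ceil_le_ceil (by gcongr)
    calc k ≤ ⌈(N:ℝ)/η⌉₊ := h1
      _ < gridK m N n := Nat.lt_succ_self _
  simp only [badSet, Set.mem_iUnion, Set.mem_iInter, Set.mem_setOf_eq, not_exists, not_forall,
    not_le] at hbad
  obtain ⟨i, him, hgt⟩ := hbad k hkK
  rw [Finset.mem_range] at him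
  set u : ℝ := ((k + i + 1 : ℕ) : ℝ) * gridη m n with hu
  set v : ℝ := ((k + i : ℕ) : ℝ) * gridη m n with hv
  have htk : t ≤ (k:ℝ) * η := by
    have h1 : t / η ≤ (k:ℝ) := Nat.le_ceil _
    calc t = (t / η) * η := by field_simp
      _ ≤ (k:ℝ) * η := mul_le_mul_of_nonneg_right h1 hη.le
  have hkt : (k:ℝ) * η < t + η := by
    have h1 : (k:ℝ) < t / η + 1 := Nat.ceil_lt_add_one (by positivity)
    have := mul_lt_mul_of_pos_right h1 hη
    calc (k:ℝ) * η < (t / η + 1) * η := this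
      _ = t + η := by field_simp
  have hmη : ((m:ℝ) + 1) * η = (1/2:ℝ)^(n+1) := by
    rw [hηdef]; unfold gridη; field_simp
  have hvt : t ≤ v := by
    rw [hv]
    calc t ≤ (k:ℝ) * η := htk
      _ ≤ ((k + i : ℕ) : ℝ) * gridη m n := by
          apply mul_le_mul_of_nonneg_right _ hη.le
          exact_mod_cast Nat.le_add_right k i
  have hut : u < t + ρ := by
    rw [hu]
    have h1 : ((k + i + 1 : ℕ) : ℝ) ≤ (k:ℝ) + (m:ℝ) := by
      push_cast
      have : (i:ℝ) + 1 ≤ (m:ℝ) := by exact_mod_cast him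
      linarith
    calc ((k + i + 1 : ℕ) : ℝ) * gridη m n ≤ ((k:ℝ) + m) * η :=
          mul_le_mul_of_nonneg_right h1 hη.le
      _ = (k:ℝ) * η + (m:ℝ) * η := by ring
      _ < t + η + (m:ℝ) * η := by linarith
      _ = t + ((m:ℝ) + 1) * η := by ring
      _ = t + (1/2:ℝ)^(n+1) := by rw [hmη]
      _ ≤ t + ρ := by linarith
  have hvu : v ≤ u := by
    rw [hu, hv]
    apply mul_le_mul_of_nonneg_right _ hη.le
    exact_mod_cast Nat.le_succ (k + i)
  have hlow : max (t - ρ) 0 ≤ t := max_le (by linarith) ht0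
  have hmemv : v ∈ Set.Icc (max (t - ρ) 0) (t + ρ) :=
    ⟨le_trans hlow hvt, le_trans hvu hut.le⟩
  have hmemu : u ∈ Set.Icc (max (t - ρ) 0) (t + ρ) :=
    ⟨le_trans hlow (le_trans hvt hvu), hut.le⟩
  have hsub : Set.Icc (max (t - ρ) 0) (t + ρ) ⊆ Set.Ici (0:ℝ) := by
    intro x hx
    exact le_trans (le_max_right _ _) hx.1
  have hfc : ContinuousOn (fun p : ℝ × ℝ => |B p.1 ω - B p.2 ω|)
      (Set.Icc (max (t - ρ) 0) (t + ρ) ×ˢ Set.Icc (max (t - ρ) 0) (t + ρ)) := by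
    apply ContinuousOn.abs
    apply ContinuousOn.sub
    · exact hcont.comp continuousOn_fst (fun p hp => hsub hp.1)
    · exact hcont.comp continuousOn_snd (fun p hp => hsub hp.2)
  have hbdd : BddAbove ((fun p : ℝ × ℝ => |B p.1 ω - B p.2 ω|) ''
      (Set.Icc (max (t - ρ) 0) (t + ρ) ×ˢ Set.Icc (max (t - ρ) 0) (t + ρ))) :=
    ((isCompact_Icc.prod isCompact_Icc).image_of_continuousOn hfc).bddAbove
  have hmem : |B u ω - B v ω| ∈ (fun p : ℝ × ℝ => |B p.1 ω - B p.2 ω|) ''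
      (Set.Icc (max (t - ρ) 0) (t + ρ) ×ˢ Set.Icc (max (t - ρ) 0) (t + ρ)) :=
    ⟨(u, v), ⟨hmemu, hmemv⟩, rfl⟩
  have hthr : ρ ^ ((1:ℝ)/2 + ε) ≤ thr ε n := by
    unfold thr
    exact Real.rpow_le_rpow hρ0.le hρ2 (by linarith)
  calc ρ ^ ((1:ℝ)/2 + ε) ≤ thr ε n := hthr
    _ ≤ |B u ω - B v ω| := le_of_lt hgt
    _ ≤ sSup _ := le_csSup hbdd hmem

end BMIncrLB

open BMIncrLB in
/-- almost surely, for every `N ∈ ℕ` and `ε > 0` there is `h(ω) > 0` such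
that for all `ρ ∈ (0, h(ω)]` and `t ∈ [0, N]`, the oscillation of Brownian motion over
`[max(t-ρ,0), t+ρ]` is at least `ρ^{1/2+ε}`. -/
theorem brownian_increments_lowerBound {Ω : Type*} [MeasurableSpace Ω] (P : Measure Ω)
    [IsProbabilityMeasure P] (B : ℝ → Ω → ℝ) (hB : IsStandardBM P B) :
    ∃ Ω₀ : Set Ω, MeasurableSet Ω₀ ∧ P Ω₀ = 1 ∧
      ∀ ω ∈ Ω₀, ∀ N : ℕ, ∀ ε : ℝ, 0 < ε → ∃ h > (0:ℝ), ∀ ρ : ℝ, 0 < ρ → ρ ≤ h →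
        ∀ t ∈ Set.Icc (0:ℝ) (N:ℝ),
          ρ ^ ((1:ℝ)/2 + ε) ≤
            sSup ((fun p : ℝ × ℝ => |B p.1 ω - B p.2 ω|) ''
              (Set.Icc (max (t - ρ) 0) (t + ρ) ×ˢ Set.Icc (max (t - ρ) 0) (t + ρ))) := by
  classical
  -- continuity event
  have hnull : P {ω | ¬ ContinuousOn (fun s => B s ω) (Set.Ici 0)} = 0 := by
    have := hB.cont
    rwa [MeasureTheory.ae_iff] at this
  obtain ⟨u, hsu, hum, hu0⟩ := exists_measurable_superset_of_null hnull
  set εj : ℕ → ℝ := fun j => 1/((j:ℝ)+1) with hεjdef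
  have hεjpos : ∀ j, 0 < εj j := fun j => by simp only [hεjdef]; positivity
  have hmεj : ∀ j : ℕ, 3 ≤ ((3*(j+1) : ℕ):ℝ) * εj j := by
    intro j
    simp only [hεjdef]
    rw [mul_one_div, le_div_iff₀ (by positivity)]
    push_cast
    linarith
  set Bad : ℕ → ℕ → ℕ → Set Ω := fun N j n => badSet B (3*(j+1)) (εj j) N n with hBaddef
  set G : ℕ → ℕ → Set Ω := fun N j => (Filter.limsup (Bad N j) Filter.atTop)ᶜ with hGdef
  have hBadmeas : ∀ N j n, MeasurableSet (Bad N j n) :=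
    fun N j n => badSet_measurable hB.measurable _ _ _ _
  have hGmeas : ∀ N j, MeasurableSet (G N j) := by
    intro N j
    apply MeasurableSet.compl
    rw [Filter.limsup_eq_iInf_iSup_of_nat]
    exact MeasurableSet.iInter fun n =>
      MeasurableSet.iUnion fun i => MeasurableSet.iUnion fun _ => hBadmeas N j i
  have hlimsup0 : ∀ N j, P (Filter.limsup (Bad N j) Filter.atTop) = 0 := by
    intro N j
    apply measure_limsup_atTop_eq_zero
    obtain ⟨c, hc⟩ : ∃ c : ℝ, ∀ n, P (Bad N j n) ≤ ENNReal.ofReal (c * (1/2:ℝ)^n) :=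
      ⟨_, fun n => badSet_prob hB (hεjpos j) (hmεj j) n⟩
    have hbound : ∀ n, P (Bad N j n) ≤ ENNReal.ofReal |c| * (ENNReal.ofReal (1/2))^n := by
      intro n
      refine le_trans (hc n) ?_
      rw [← ENNReal.ofReal_pow (by norm_num : (0:ℝ) ≤ 1/2), ← ENNReal.ofReal_mul (abs_nonneg c)]
      exact ENNReal.ofReal_le_ofReal
        (mul_le_mul_of_nonneg_right (le_abs_self c) (by positivity))
    refine ne_top_of_le_ne_top ?_ (ENNReal.tsum_le_tsum hbound)
    rw [ENNReal.tsum_mul_left, ENNReal.tsum_geometric]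
    apply ENNReal.mul_ne_top ENNReal.ofReal_ne_top
    have hlt : ENNReal.ofReal (1/2) < 1 := by
      rw [ENNReal.ofReal_lt_one]
      norm_num
    exact ENNReal.inv_ne_top.2 (tsub_pos_of_lt hlt).ne'
  refine ⟨uᶜ ∩ ⋂ N, ⋂ j, G N j, ?_, ?_, ?_⟩
  · exact hum.compl.inter (MeasurableSet.iInter fun N => MeasurableSet.iInter fun j => hGmeas N j)
  · -- probability one
    have hcompl : P ((uᶜ ∩ ⋂ N, ⋂ j, G N j)ᶜ) = 0 := by
      rw [Set.compl_inter, compl_compl, Set.compl_iInter]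
      apply measure_union_null hu0
      apply measure_iUnion_null
      intro N
      rw [Set.compl_iInter]
      apply measure_iUnion_null
      intro j
      rw [hGdef]
      simpa [compl_compl] using hlimsup0 N j
    have hmeas := hum.compl.inter
      (MeasurableSet.iInter fun N => MeasurableSet.iInter fun j => hGmeas N j)
    have := measure_add_measure_compl (μ := P) hmeas
    rw [hcompl, add_zero, measure_univ] at this
    exact this
  · intro ω hω N ε hε
    obtain ⟨hωu, hωG⟩ := hω
    have hcont : ContinuousOn (fun s => B s ω) (Set.Ici 0) := by
      by_contra hc
      exact hωu (hsu hc)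
    obtain ⟨j, hj⟩ := exists_nat_one_div_lt hε
    have hωGNj : ω ∈ G N j := by
      simp only [Set.mem_iInter] at hωG
      exact hωG N j
    have hev : ∃ n₀ : ℕ, ∀ n ≥ n₀, ω ∉ Bad N j n := by
      rw [hGdef] at hωGNj
      simp only [Set.mem_compl_iff, Filter.limsup_eq_iInf_iSup_of_nat, Set.iInf_eq_iInter,
        Set.iSup_eq_iUnion, Set.mem_iInter, Set.mem_iUnion, not_forall, not_exists] at hωGNj
      obtain ⟨n₀, hn₀⟩ := hωGNj
      exact ⟨n₀, fun n hn => hn₀ n hn⟩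
    obtain ⟨n₀, hn₀⟩ := hev
    refine ⟨(1/2:ℝ)^(n₀+1), by positivity, ?_⟩
    intro ρ hρ0 hρh t ht
    have hhle1 : (1/2:ℝ)^(n₀+1) ≤ 1 := pow_le_one₀ (by norm_num) (by norm_num)
    have hρle1 : ρ ≤ 1 := le_trans hρh hhle1
    have hexists : ∃ nn : ℕ, (1/2:ℝ)^nn < ρ :=
      exists_pow_lt_of_lt_one hρ0 (by norm_num)
    have hn1 : (1/2:ℝ)^(Nat.find hexists) < ρ := Nat.find_spec hexists
    have hn1pos : Nat.find hexists ≠ 0 := by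
      intro h0
      rw [h0, pow_zero] at hn1
      linarith
    set n : ℕ := Nat.find hexists - 1 with hn
    have hsucc : n + 1 = Nat.find hexists := Nat.succ_pred_eq_of_pos (Nat.pos_of_ne_zero hn1pos)
    have hρ1 : (1/2:ℝ)^(n+1) < ρ := by rw [hsucc]; exact hn1
    have hρ2 : ρ ≤ (1/2:ℝ)^n := by
      by_contra hlt
      push_neg at hlt
      exact Nat.find_min hexists (by omega) hlt
    have hnn₀ : n₀ ≤ n := by
      by_contra hc
      push_neg at hc
      have h1 : ((1:ℝ)/2)^(n₀+1) ≤ (1/2:ℝ)^(n+1) :=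
        pow_le_pow_of_le_one (by norm_num) (by norm_num) (by omega)
      linarith
    have hbad : ω ∉ Bad N j n := hn₀ n hnn₀
    have hdet := det_step hcont (hεjpos j) hbad hρ1 hρ2 ht
    refine le_trans ?_ hdet
    apply Real.rpow_le_rpow_of_exponent_ge hρ0 hρle1
    have : εj j ≤ ε := le_of_lt hj
    linarith
end
end

section
/- Let f : ℝ → ℝ be continuous, t ∈ ℝ with f(t) = 0, and let h ∈ (0,1). Assume: (i) for every s' ≥ −h, Σ_{f,t}(s') ≥ min(h + s', h); and (ii) for every ε > 0 there exist C > 0 and ρ > 0 such that |f(u)| ≤ C·|u − t|^{h−ε} for all u ∈ B(t,ρ). Then the pseudo 2-microlocal frontier of the squared function f² : u ↦ f(u)² satisfies, for every s' ≥ −2h: Σ_{f²,t}(s') ≥ min(2h + s', h). -/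
open MeasureTheory Metric Set Filter

noncomputable section

private lemma frontier_ge_of_forall (P : ℝ → Prop) (M c : ℝ) (hcM : c < M)
    (H : ∀ σ : ℝ, c < σ → σ < M → P σ) :
    (M : EReal) ≤ sSup {x : EReal | ∃ a : ℝ, x = (a : EReal) ∧ P a} := by
  by_contra hlt
  push_neg at hlt
  have hb : max (sSup {x : EReal | ∃ a : ℝ, x = (a : EReal) ∧ P a}) ((c : ℝ) : EReal)
      < (M : EReal) := max_lt hlt (by exact_mod_cast hcM)
  obtain ⟨σ, hσ1, hσ2⟩ := EReal.exists_between_coe_real hb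
  have hc : c < σ := by exact_mod_cast (le_max_right _ _).trans_lt hσ1
  have hMσ : σ < M := by exact_mod_cast hσ2
  have hmem : (σ : EReal) ≤ sSup {x : EReal | ∃ a : ℝ, x = (a : EReal) ∧ P a} :=
    le_sSup ⟨σ, rfl, H σ hc hMσ⟩
  exact absurd (hmem.trans_lt ((le_max_left _ _).trans_lt hσ1)) (lt_irrefl _)

private lemma exists_of_le_sSup (P : ℝ → Prop) (c σ : ℝ)
    (hle : (c : EReal) ≤ sSup {x : EReal | ∃ a : ℝ, x = (a : EReal) ∧ P a})
    (hσ : σ < c) : ∃ a : ℝ, σ < a ∧ P a := by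
  by_contra hcon
  push_neg at hcon
  have hsup : sSup {x : EReal | ∃ a : ℝ, x = (a : EReal) ∧ P a} ≤ (σ : EReal) := by
    apply sSup_le
    rintro x ⟨a, rfl, ha⟩
    exact_mod_cast not_lt.1 fun h => hcon a h ha
  have := hle.trans hsup
  exact absurd (by exact_mod_cast this : c ≤ σ) (not_le.mpr hσ)

private lemma abs_mid {u v t s : ℝ} (hs : s ∈ Set.uIoc v u) : |s - t| ≤ |u - t| + |v - t| := by
  have hu1 := le_abs_self (u - t); have hu2 := neg_abs_le (u - t)
  have hv1 := le_abs_self (v - t); have hv2 := neg_abs_le (v - t)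
  rw [Set.mem_uIoc] at hs
  rw [abs_sub_le_iff]
  rcases hs with ⟨h1, h2⟩ | ⟨h1, h2⟩ <;> constructor <;> linarith


/-- lower bound on the pseudo 2-microlocal frontier of the square `f²`
at a zero `t` of `f`, given the frontier lower bound `min (h + s') h` for `f` and the
pointwise bound `|f(u)| ≤ C |u - t|^{h-ε}`. -/
theorem pseudoFrontier_sq_lowerBound (f : ℝ → ℝ) (hf : Continuous f) (t : ℝ)
    (hft : f t = 0) (h : ℝ) (hh0 : 0 < h) (hh1 : h < 1)
    (hyp1 : ∀ s' : ℝ, -h ≤ s' →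
      ((min (h + s') h : ℝ) : EReal) ≤ pseudoFrontierOn Set.univ f t s')
    (hyp2 : ∀ ε > (0:ℝ), ∃ C > (0:ℝ), ∃ ρ > (0:ℝ), ∀ u ∈ Metric.ball t ρ,
      |f u| ≤ C * |u - t| ^ (h - ε)) :
    ∀ s' : ℝ, -(2 * h) ≤ s' →
      ((min (2 * h + s') h : ℝ) : EReal)
        ≤ pseudoFrontierOn Set.univ (fun u => (f u) ^ 2) t s' := by
  intro s' hs'
  have h2hs : 0 ≤ 2 * h + s' := by linarith
  set M : ℝ := min (2 * h + s') h with hMdef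
  have hM0 : 0 ≤ M := le_min h2hs hh0.le
  have hMh : M ≤ h := min_le_right _ _
  have hMs : M ≤ 2 * h + s' := min_le_left _ _
  refine frontier_ge_of_forall
    (fun σ => PseudoMemOn Set.univ (fun u => f u ^ 2) t σ s') M (M - 1) (by linarith) ?_
  intro σ hσ1 hσ2
  have hσlt2hs : σ < 2 * h + s' := lt_of_lt_of_le hσ2 hMs
  have hσlth : σ < h := lt_of_lt_of_le hσ2 hMh
  set ε : ℝ := min (h / 2) ((2 * h + s' - σ) / 2) with hεdef
  have hεpos : 0 < ε := lt_min (by linarith) (by linarith)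
  have hεh : ε ≤ h / 2 := min_le_left _ _
  have hε2 : ε ≤ (2 * h + s' - σ) / 2 := min_le_right _ _
  obtain ⟨C₂, hC₂, ρ₂, hρ₂, hb2⟩ := hyp2 ε hεpos
  by_cases hσ0 : 0 ≤ σ
  · -- nonnegative σ
    set s₁ : ℝ := s' + h - ε with hs₁def
    have hs₁ge : -h ≤ s₁ := by simp only [hs₁def]; linarith
    have hmin : σ < min (h + s₁) h := lt_min (by simp only [hs₁def]; linarith) hσlth
    obtain ⟨σ'', hσ''gt, hσ''P⟩ :=
      exists_of_le_sSup (fun a => PseudoMemOn Set.univ f t a s₁) (min (h + s₁) h) σ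
        (hyp1 s₁ hs₁ge) hmin
    rw [PseudoMemOn, if_pos (hσ0.trans hσ''gt.le)] at hσ''P
    obtain ⟨C₁, hC₁, ρ₁, hρ₁, hb1⟩ := hσ''P
    simp only [PseudoMemOn]
    rw [if_pos hσ0]
    refine ⟨2 * C₁ * C₂, by positivity, min (min ρ₁ ρ₂) (1 / 2), by positivity, ?_⟩
    rintro u ⟨hu, -⟩ v ⟨hv, -⟩
    rcases eq_or_ne u v with rfl | huv
    · simp only [sub_self, abs_zero]
      positivity
    · have hρle1 : min (min ρ₁ ρ₂) (1 / 2 : ℝ) ≤ 1 / 2 := min_le_right _ _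
      have hρleρ₁ : min (min ρ₁ ρ₂) (1 / 2 : ℝ) ≤ ρ₁ := le_trans (min_le_left _ _) (min_le_left _ _)
      have hρleρ₂ : min (min ρ₁ ρ₂) (1 / 2 : ℝ) ≤ ρ₂ :=
        le_trans (min_le_left _ _) (min_le_right _ _)
      have hud : |u - t| < min (min ρ₁ ρ₂) (1 / 2) := by
        rw [mem_ball, Real.dist_eq] at hu; exact hu
      have hvd : |v - t| < min (min ρ₁ ρ₂) (1 / 2) := by
        rw [mem_ball, Real.dist_eq] at hv; exact hv
      have hdpos : 0 < |u - v| := abs_pos.mpr (sub_ne_zero.mpr huv)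
      have hdS : |u - v| ≤ |u - t| + |v - t| := by
        calc |u - v| ≤ |u - t| + |t - v| := abs_sub_le u t v
          _ = |u - t| + |v - t| := by rw [abs_sub_comm t v]
      have hSpos : 0 < |u - t| + |v - t| := lt_of_lt_of_le hdpos hdS
      have hd1 : |u - v| ≤ 1 := by
        have h1 := lt_of_lt_of_le hud hρle1
        have h2 := lt_of_lt_of_le hvd hρle1
        linarith
      have key1 : |f u - f v| ≤ C₁ * |u - v| ^ σ'' * (|u - t| + |v - t|) ^ (-s₁) := by
        refine hb1 u ⟨?_, Set.mem_univ u⟩ v ⟨?_, Set.mem_univ v⟩ <;>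
          rw [mem_ball, Real.dist_eq]
        · exact lt_of_lt_of_le hud hρleρ₁
        · exact lt_of_lt_of_le hvd hρleρ₁
      have key2u : |f u| ≤ C₂ * (|u - t| + |v - t|) ^ (h - ε) := by
        refine (hb2 u (by rw [mem_ball, Real.dist_eq]; exact lt_of_lt_of_le hud hρleρ₂)).trans ?_
        refine mul_le_mul_of_nonneg_left ?_ hC₂.le
        exact Real.rpow_le_rpow (abs_nonneg _) (le_add_of_nonneg_right (abs_nonneg _))
          (by linarith)
      have key2v : |f v| ≤ C₂ * (|u - t| + |v - t|) ^ (h - ε) := by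
        refine (hb2 v (by rw [mem_ball, Real.dist_eq]; exact lt_of_lt_of_le hvd hρleρ₂)).trans ?_
        refine mul_le_mul_of_nonneg_left ?_ hC₂.le
        exact Real.rpow_le_rpow (abs_nonneg _) (le_add_of_nonneg_left (abs_nonneg _))
          (by linarith)
      have hmulS : (|u - t| + |v - t|) ^ (-s₁) * (|u - t| + |v - t|) ^ (h - ε)
          = (|u - t| + |v - t|) ^ (-s') := by
        rw [← Real.rpow_add hSpos]
        congr 1
        simp only [hs₁def]; ring
      have hsq : f u ^ 2 - f v ^ 2 = (f u - f v) * (f u + f v) := by ring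
      calc |f u ^ 2 - f v ^ 2| = |f u - f v| * |f u + f v| := by rw [hsq, abs_mul]
        _ ≤ (C₁ * |u - v| ^ σ'' * (|u - t| + |v - t|) ^ (-s₁))
            * (2 * C₂ * (|u - t| + |v - t|) ^ (h - ε)) := by
            refine mul_le_mul key1 ?_ (abs_nonneg _) (by positivity)
            calc |f u + f v| ≤ |f u| + |f v| := abs_add_le _ _
              _ ≤ 2 * C₂ * (|u - t| + |v - t|) ^ (h - ε) := by linarith
        _ = 2 * C₁ * C₂ * |u - v| ^ σ''
            * ((|u - t| + |v - t|) ^ (-s₁) * (|u - t| + |v - t|) ^ (h - ε)) := by ring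
        _ = 2 * C₁ * C₂ * |u - v| ^ σ'' * (|u - t| + |v - t|) ^ (-s') := by rw [hmulS]
        _ ≤ 2 * C₁ * C₂ * |u - v| ^ σ * (|u - t| + |v - t|) ^ (-s') := by
            refine mul_le_mul_of_nonneg_right ?_ (Real.rpow_nonneg hSpos.le _)
            refine mul_le_mul_of_nonneg_left ?_ (by positivity)
            exact Real.rpow_le_rpow_of_exponent_ge hdpos hd1 hσ''gt.le
  · -- negative σ
    push_neg at hσ0
    have hσm1 : -1 < σ := by linarith
    have hfloor : ⌊σ⌋ = -1 := Int.floor_eq_iff.mpr (by constructor <;> push_cast <;> linarith)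
    have htoNat : (-⌊σ⌋).toNat = 1 := by rw [hfloor]; rfl
    simp only [PseudoMemOn]
    rw [if_neg (not_le.mpr hσ0), htoNat]
    have hgc : Continuous (fun s : ℝ => f s ^ 2 - f t ^ 2) := (hf.pow 2).sub continuous_const
    have hiter : ∀ w : ℝ,
        iterInt t (fun s => (fun u => f u ^ 2) s - (fun u => f u ^ 2) t) 1 w
          = ∫ s in t..w, (f s ^ 2 - f t ^ 2) := fun w => rfl
    refine ⟨C₂ ^ 2, by positivity, min (ρ₂ / 2) (1 / 2), by positivity, ?_⟩
    rintro u ⟨hu, -⟩ v ⟨hv, -⟩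
    rcases eq_or_ne u v with rfl | huv
    · simp only [sub_self, abs_zero]
      positivity
    · have hud : |u - t| < min (ρ₂ / 2) (1 / 2) := by rw [mem_ball, Real.dist_eq] at hu; exact hu
      have hvd : |v - t| < min (ρ₂ / 2) (1 / 2) := by rw [mem_ball, Real.dist_eq] at hv; exact hv
      have hρ2' : min (ρ₂ / 2) (1 / 2 : ℝ) ≤ ρ₂ / 2 := min_le_left _ _
      have hρ1' : min (ρ₂ / 2) (1 / 2 : ℝ) ≤ 1 / 2 := min_le_right _ _
      have hdpos : 0 < |u - v| := abs_pos.mpr (sub_ne_zero.mpr huv)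
      have hdS : |u - v| ≤ |u - t| + |v - t| := by
        calc |u - v| ≤ |u - t| + |t - v| := abs_sub_le u t v
          _ = |u - t| + |v - t| := by rw [abs_sub_comm t v]
      have hSpos : 0 < |u - t| + |v - t| := lt_of_lt_of_le hdpos hdS
      have hSρ₂ : |u - t| + |v - t| < ρ₂ := by
        have h1 := lt_of_lt_of_le hud hρ2'
        have h2 := lt_of_lt_of_le hvd hρ2'
        linarith
      have hS1 : |u - t| + |v - t| ≤ 1 := by
        have h1 := lt_of_lt_of_le hud hρ1'
        have h2 := lt_of_lt_of_le hvd hρ1'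
        linarith
      have hd1 : |u - v| ≤ 1 := hdS.trans hS1
      have hintu : IntervalIntegrable (fun s : ℝ => f s ^ 2 - f t ^ 2) volume t u :=
        hgc.intervalIntegrable t u
      have hintv : IntervalIntegrable (fun s : ℝ => f s ^ 2 - f t ^ 2) volume t v :=
        hgc.intervalIntegrable t v
      have hsub : (∫ s in t..u, (f s ^ 2 - f t ^ 2)) - ∫ s in t..v, (f s ^ 2 - f t ^ 2)
          = ∫ s in v..u, (f s ^ 2 - f t ^ 2) :=
        intervalIntegral.integral_interval_sub_left hintu hintv
      have hpt : ∀ s ∈ Set.uIoc v u,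
          ‖f s ^ 2 - f t ^ 2‖ ≤ C₂ ^ 2 * ((|u - t| + |v - t|) ^ (h - ε)) ^ 2 := by
        intro s hs
        have hsS : |s - t| ≤ |u - t| + |v - t| := abs_mid hs
        have hsball : s ∈ Metric.ball t ρ₂ := by
          rw [mem_ball, Real.dist_eq]; exact lt_of_le_of_lt hsS hSρ₂
        have h2 := hb2 s hsball
        rw [Real.norm_eq_abs, hft]
        have hz : f s ^ 2 - (0 : ℝ) ^ 2 = f s ^ 2 := by ring
        rw [hz]
        calc |f s ^ 2| = |f s| ^ 2 := by rw [abs_pow]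
          _ ≤ (C₂ * |s - t| ^ (h - ε)) ^ 2 := pow_le_pow_left₀ (abs_nonneg _) h2 2
          _ ≤ (C₂ * (|u - t| + |v - t|) ^ (h - ε)) ^ 2 := by
              refine pow_le_pow_left₀ (by positivity) ?_ 2
              exact mul_le_mul_of_nonneg_left
                (Real.rpow_le_rpow (abs_nonneg _) hsS (by linarith)) hC₂.le
          _ = C₂ ^ 2 * ((|u - t| + |v - t|) ^ (h - ε)) ^ 2 := by ring
      have hintbd : |∫ s in v..u, (f s ^ 2 - f t ^ 2)|
          ≤ C₂ ^ 2 * ((|u - t| + |v - t|) ^ (h - ε)) ^ 2 * |u - v| := by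
        have := intervalIntegral.norm_integral_le_of_norm_le_const hpt
        simpa [Real.norm_eq_abs] using this
      have h2pow : ((|u - t| + |v - t|) ^ (h - ε)) ^ (2 : ℕ)
          = (|u - t| + |v - t|) ^ ((h - ε) * 2) := by
        rw [← Real.rpow_natCast ((|u - t| + |v - t|) ^ (h - ε)) 2,
          ← Real.rpow_mul hSpos.le]
        norm_num
      have hdsplit : |u - v| ^ (σ + 1) * |u - v| ^ (-σ) = |u - v| := by
        have he : (σ + 1) + (-σ) = 1 := by ring
        rw [← Real.rpow_add hdpos, he, Real.rpow_one]
      have hSsplit : (|u - t| + |v - t|) ^ ((h - ε) * 2)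
          = (|u - t| + |v - t|) ^ (-s') * (|u - t| + |v - t|) ^ (2 * h + s' - 2 * ε) := by
        rw [← Real.rpow_add hSpos]
        congr 1
        ring
      have hkey2 : (|u - t| + |v - t|) ^ (2 * h + s' - 2 * ε) * |u - v| ^ (-σ) ≤ 1 := by
        rcases le_or_gt 0 (2 * h + s' - 2 * ε) with he | he
        · have ha : (|u - t| + |v - t|) ^ (2 * h + s' - 2 * ε) ≤ 1 :=
            Real.rpow_le_one hSpos.le hS1 he
          have hb : |u - v| ^ (-σ) ≤ 1 := Real.rpow_le_one hdpos.le hd1 (by linarith)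
          calc (|u - t| + |v - t|) ^ (2 * h + s' - 2 * ε) * |u - v| ^ (-σ)
              ≤ 1 * 1 := mul_le_mul ha hb (Real.rpow_nonneg hdpos.le _) zero_le_one
            _ = 1 := by norm_num
        · have ha : (|u - t| + |v - t|) ^ (2 * h + s' - 2 * ε)
              ≤ |u - v| ^ (2 * h + s' - 2 * ε) :=
            Real.rpow_le_rpow_of_nonpos hdpos hdS he.le
          calc (|u - t| + |v - t|) ^ (2 * h + s' - 2 * ε) * |u - v| ^ (-σ)
              ≤ |u - v| ^ (2 * h + s' - 2 * ε) * |u - v| ^ (-σ) :=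
                mul_le_mul_of_nonneg_right ha (Real.rpow_nonneg hdpos.le _)
            _ = |u - v| ^ (2 * h + s' - 2 * ε + -σ) := (Real.rpow_add hdpos _ _).symm
            _ ≤ 1 := Real.rpow_le_one hdpos.le hd1 (by linarith)
      have key : ((|u - t| + |v - t|) ^ (h - ε)) ^ 2 * |u - v|
          ≤ |u - v| ^ (σ + 1) * (|u - t| + |v - t|) ^ (-s') := by
        rw [h2pow, hSsplit]
        calc (|u - t| + |v - t|) ^ (-s') * (|u - t| + |v - t|) ^ (2 * h + s' - 2 * ε)
              * |u - v|
            = (|u - t| + |v - t|) ^ (-s') * (|u - t| + |v - t|) ^ (2 * h + s' - 2 * ε)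
              * (|u - v| ^ (σ + 1) * |u - v| ^ (-σ)) := by rw [hdsplit]
          _
            = (|u - v| ^ (σ + 1) * (|u - t| + |v - t|) ^ (-s'))
              * ((|u - t| + |v - t|) ^ (2 * h + s' - 2 * ε) * |u - v| ^ (-σ)) := by ring
          _ ≤ (|u - v| ^ (σ + 1) * (|u - t| + |v - t|) ^ (-s')) * 1 :=
              mul_le_mul_of_nonneg_left hkey2 (by positivity)
          _ = |u - v| ^ (σ + 1) * (|u - t| + |v - t|) ^ (-s') := mul_one _
      have hcast : σ + ((1 : ℕ) : ℝ) = σ + 1 := by norm_num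
      calc |iterInt t (fun s => (fun u => f u ^ 2) s - (fun u => f u ^ 2) t) 1 u
            - iterInt t (fun s => (fun u => f u ^ 2) s - (fun u => f u ^ 2) t) 1 v|
          = |∫ s in v..u, (f s ^ 2 - f t ^ 2)| := by rw [hiter u, hiter v, hsub]
        _ ≤ C₂ ^ 2 * ((|u - t| + |v - t|) ^ (h - ε)) ^ 2 * |u - v| := hintbd
        _ = C₂ ^ 2 * (((|u - t| + |v - t|) ^ (h - ε)) ^ 2 * |u - v|) := by ring
        _ ≤ C₂ ^ 2 * (|u - v| ^ (σ + 1) * (|u - t| + |v - t|) ^ (-s')) :=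
            mul_le_mul_of_nonneg_left key (by positivity)
        _ = C₂ ^ 2 * |u - v| ^ (σ + ((1 : ℕ) : ℝ)) * (|u - t| + |v - t|) ^ (-s') := by
            rw [hcast]; ring


end
end
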